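/- arXiv:2405.03367 — 2 statements merged into one kernel-verified Lean document; each statement's English description precedes it below -/
import Mathlib

section
/- For every left-reduced ground rewrite system R contained in the reduction ordering ≻, every ground term t, and every label m ∈ {0,1,2}, the R-redex multiset rm_R(t,m) is well-defined: the recursive specification (rm_R(t,m) = ∅ if t is R-irreducible; rm_R(t,m) = {(u,m)} ∪ rm_R(t',m) if t →_R t' using a rule u → v ∈ R at position p with p = ε or m > 0; rm_R(t,m) = {(u,1)} ∪ rm_R(t',m) if t →_R t' using a rule u → v ∈ R at position p > ε with m = 0) assigns to each (t,m) exactly one multiset, independently of the choice of rewrite steps. -/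
/- Common infrastructure: first-order terms, clauses, ground rewrite systems,
   reduction orderings, the (Horn and non-Horn) R-normalization closure orderings,
   the Ground Closure (Horn) Superposition Calculus and its redundancy criterion,
   and the candidate interpretation construction, following Waldmann,
   "On the (In-)Completeness of Destructive Equality Resolution in the
   Superposition Calculus". -/

set_option autoImplicit false
set_option maxHeartbeats 1000000

noncomputable section

/-- First-order terms over function symbols `F` and variables `V`. -/
inductive Trm (F V : Type) : Type
  | var : V → Trm F V
  | app : F → List (Trm F V) → Trm F V

namespace Trm
variable {F V : Type}

instance : DecidableEq (Trm F V) := Classical.decEq _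

/-- Application of a substitution to a term. -/
def subst (θ : V → Trm F V) : Trm F V → Trm F V
  | var x => θ x
  | app f ts => app f (ts.attach.map fun t => subst θ t.1)
decreasing_by
  have := List.sizeOf_lt_of_mem t.2
  simp only [Trm.app.sizeOf_spec]
  omega

/-- A term is ground if it contains no variables. -/
inductive IsGround : Trm F V → Prop
  | app {f : F} {ts : List (Trm F V)} : (∀ t ∈ ts, IsGround t) → IsGround (app f ts)

/-- The set of all subterms of a term (including the term itself). -/
def subterms : Trm F V → Finset (Trm F V)
  | var x => {var x}
  | app f ts => insert (app f ts) ((ts.attach.map fun t => subterms t.1).foldr (· ∪ ·) ∅)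
decreasing_by
  have := List.sizeOf_lt_of_mem t.2
  simp only [Trm.app.sizeOf_spec]
  omega

/-- The set of proper subterms of a term (subterms at positions `> ε`). -/
def psubterms : Trm F V → Finset (Trm F V)
  | var _ => ∅
  | app _ ts => (ts.map fun t => subterms t).foldr (· ∪ ·) ∅

end Trm

/-- Contexts: terms with exactly one hole. -/
inductive Ctx (F V : Type) : Type
  | hole : Ctx F V
  | app : F → List (Trm F V) → Ctx F V → List (Trm F V) → Ctx F V

/-- Filling the hole of a context with a term. -/
def Ctx.fill {F V : Type} : Ctx F V → Trm F V → Trm F V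
  | .hole, t => t
  | .app f l c r, t => Trm.app f (l ++ c.fill t :: r)

variable {F V : Type}

/-- `RewAt R s t u root` holds iff `s` rewrites to `t` in one step using a rule of `R`
whose left-hand side is `u`, and `root = true` iff the rewrite position is `ε`. -/
inductive RewAt (R : Set (Trm F V × Trm F V)) : Trm F V → Trm F V → Trm F V → Bool → Prop
  | root {u v : Trm F V} : (u, v) ∈ R → RewAt R u v u true
  | congr {t t' u : Trm F V} {b : Bool} {f : F} {l r : List (Trm F V)} :
      RewAt R t t' u b → RewAt R (.app f (l ++ t :: r)) (.app f (l ++ t' :: r)) u false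

/-- One-step rewrite relation `s →_R t`. -/
def Step (R : Set (Trm F V × Trm F V)) (s t : Trm F V) : Prop := ∃ u b, RewAt R s t u b

/-- `t` is irreducible w.r.t. `R`. -/
def Irred (R : Set (Trm F V × Trm F V)) (t : Trm F V) : Prop := ∀ t', ¬ Step R t t'

/-- `R` is left-reduced: the left-hand side of each rule is irreducible by the other rules. -/
def LeftReduced (R : Set (Trm F V × Trm F V)) : Prop := ∀ p ∈ R, Irred (R \ {p}) p.1

/-- A reduction ordering that is total on ground terms. -/
structure ReductionOrdering (F V : Type) where
  gt : Trm F V → Trm F V → Prop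
  trans : ∀ {a b c : Trm F V}, gt a b → gt b c → gt a c
  wf : WellFounded fun a b : Trm F V => gt b a
  compat_ctx : ∀ {s t : Trm F V} (f : F) (l r : List (Trm F V)),
      gt s t → gt (.app f (l ++ s :: r)) (.app f (l ++ t :: r))
  compat_subst : ∀ {s t : Trm F V} (θ : V → Trm F V), gt s t → gt (s.subst θ) (t.subst θ)
  total_ground : ∀ {s t : Trm F V}, s.IsGround → t.IsGround → s ≠ t → gt s t ∨ gt t s

/-- A left-reduced ground rewrite system contained in the reduction ordering `O`. -/
def GoodRS (O : ReductionOrdering F V) (R : Set (Trm F V × Trm F V)) : Prop :=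
  LeftReduced R ∧ ∀ p ∈ R, p.1.IsGround ∧ p.2.IsGround ∧ O.gt p.1 p.2

/-- Reflexive-transitive rewriting to an `R`-normal form. -/
def ReachNF (R : Set (Trm F V × Trm F V)) (t t' : Trm F V) : Prop :=
  Relation.ReflTransGen (Step R) t t' ∧ Irred R t'

open Classical in
/-- The `R`-normal form `t↓_R` of `t` (via choice; unique for terminating confluent `R`). -/
def nf (R : Set (Trm F V × Trm F V)) (t : Trm F V) : Trm F V :=
  if h : ∃ t', ReachNF R t t' then h.choose else t

/-- The graph of the labeled `R`-redex multiset function `rm_R(t,m)` of Definition 1: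
`RM R t m S` holds iff `S` is a possible result of collecting the labeled redexes and
recursing along some `R`-normalization of `t`. -/
inductive RM (R : Set (Trm F V × Trm F V)) : Trm F V → ℕ → Multiset (Trm F V × ℕ) → Prop
  | irred {t : Trm F V} {m : ℕ} : Irred R t → RM R t m 0
  | step_top {t t' u : Trm F V} {b : Bool} {m : ℕ} {S : Multiset (Trm F V × ℕ)} :
      RewAt R t t' u b → (b = true ∨ 0 < m) → RM R t' m S → RM R t m ((u, m) ::ₘ S)
  | step_deep {t t' u : Trm F V} {S : Multiset (Trm F V × ℕ)} :
      RewAt R t t' u false → RM R t' 0 S → RM R t 0 ((u, 1) ::ₘ S)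

open Classical in
/-- The labeled `R`-redex multiset `rm_R(t,m)` (via choice; unique under the
hypotheses of Lemma 1). -/
def rm (R : Set (Trm F V × Trm F V)) (t : Trm F V) (m : ℕ) : Multiset (Trm F V × ℕ) :=
  if h : ∃ S, RM R t m S then h.choose else 0

/-- Equational literals. -/
inductive Lit (F V : Type) : Type
  | pos : Trm F V → Trm F V → Lit F V
  | neg : Trm F V → Trm F V → Lit F V

instance : DecidableEq (Lit F V) := Classical.decEq _

def Lit.subst (θ : V → Trm F V) : Lit F V → Lit F V
  | .pos s t => .pos (s.subst θ) (t.subst θ)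
  | .neg s t => .neg (s.subst θ) (t.subst θ)

def Lit.IsGround : Lit F V → Prop
  | .pos s t => s.IsGround ∧ t.IsGround
  | .neg s t => s.IsGround ∧ t.IsGround

def Lit.posQ : Lit F V → Bool
  | .pos _ _ => true
  | .neg _ _ => false

/-- A clause is a finite multiset of literals; `⊥` is the empty clause `0`. -/
abbrev Clause (F V : Type) := Multiset (Lit F V)

def Clause.subst (θ : V → Trm F V) (C : Clause F V) : Clause F V := C.map (Lit.subst θ)

def Clause.IsGround (C : Clause F V) : Prop := ∀ L ∈ C, L.IsGround

/-- Horn clause: at most one positive literal. -/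
def IsHorn (C : Clause F V) : Prop := Multiset.card (C.filter fun L => L.posQ = true) ≤ 1

/-- The (Dershowitz-Manna) multiset extension of a relation, `M` greater than `N`. -/
def MultGT {α : Type} (r : α → α → Prop) (M N : Multiset α) : Prop :=
  ∃ X Y Z, M = Z + X ∧ N = Z + Y ∧ X ≠ 0 ∧ ∀ y ∈ Y, ∃ x ∈ X, r x y

/-- The multiset associated to a literal for the literal ordering. -/
def Lit.mset : Lit F V → Multiset (Trm F V)
  | .pos s t => {s, t}
  | .neg s t => {s, s, t, t}

/-- The literal ordering `≻_L`. -/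
def litGT (O : ReductionOrdering F V) (L L' : Lit F V) : Prop := MultGT O.gt L.mset L'.mset

/-- The clause ordering `≻_C`. -/
def clauseGT (O : ReductionOrdering F V) (C D : Clause F V) : Prop := MultGT (litGT O) C D

/-- `L` is maximal w.r.t. the rest clause `D`. -/
def MaxIn (O : ReductionOrdering F V) (L : Lit F V) (D : Clause F V) : Prop :=
  ∀ L' ∈ D, ¬ litGT O L' L

/-- `L` is strictly maximal w.r.t. the rest clause `D`. -/
def SMaxIn (O : ReductionOrdering F V) (L : Lit F V) (D : Clause F V) : Prop :=
  ∀ L' ∈ D, ¬ litGT O L' L ∧ L' ≠ L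

section TermSets

def Lit.negSubs : Lit F V → Finset (Trm F V)
  | .neg s t => s.subterms ∪ t.subterms
  | .pos _ _ => ∅

def Lit.posPSubs : Lit F V → Finset (Trm F V)
  | .pos s t => s.psubterms ∪ t.psubterms
  | .neg _ _ => ∅

def Lit.posSubs : Lit F V → Finset (Trm F V)
  | .pos s t => s.subterms ∪ t.subterms
  | .neg _ _ => ∅

def Lit.negTops : Lit F V → Finset (Trm F V)
  | .neg s t => {s, t}
  | .pos _ _ => ∅

def Lit.posTops : Lit F V → Finset (Trm F V)
  | .pos s t => {s, t}
  | .neg _ _ => ∅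

def Lit.allSubs : Lit F V → Finset (Trm F V)
  | .pos s t => s.subterms ∪ t.subterms
  | .neg s t => s.subterms ∪ t.subterms

/-- `ss⁻(C)`: subterms of sides of negative literals. -/
def ssN (C : Clause F V) : Finset (Trm F V) := C.toFinset.sup Lit.negSubs
/-- `ss⁺_{>ε}(C)`: proper subterms of sides of positive literals. -/
def ssPp (C : Clause F V) : Finset (Trm F V) := C.toFinset.sup Lit.posPSubs
/-- All subterms of sides of positive literals. -/
def ssP (C : Clause F V) : Finset (Trm F V) := C.toFinset.sup Lit.posSubs
/-- `ts⁻(C)`: sides of negative literals. -/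
def tsN (C : Clause F V) : Finset (Trm F V) := C.toFinset.sup Lit.negTops
/-- `ts⁺(C)`: sides of positive literals. -/
def tsP (C : Clause F V) : Finset (Trm F V) := C.toFinset.sup Lit.posTops
/-- All subterms occurring in `C`. -/
def allSub (C : Clause F V) : Finset (Trm F V) := C.toFinset.sup Lit.allSubs

/-- The labeled subterm set `lss(C)` of Definition 1. -/
def lss (C : Clause F V) : Finset (Trm F V × ℕ) :=
  (ssN C).image (fun t => (t, 2)) ∪ ((ssPp C \ ssN C).image fun t => (t, 1)) ∪
    ((tsP C \ (ssPp C ∪ ssN C)).image fun t => (t, 0))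

/-- The labeled topterm set `lts(C)` of Definition 1. -/
def lts (C : Clause F V) : Finset (Trm F V × ℕ) :=
  (tsN C).image (fun t => (t, 2)) ∪ ((tsP C \ tsN C).image fun t => (t, 0))

end TermSets

/-- Contribution of one labeled subterm of `C` to `nm_R(C·θ)`. -/
def nmElt (R : Set (Trm F V × Trm F V)) (θ : V → Trm F V) : Trm F V × ℕ → Multiset (Trm F V × ℕ)
  | (.var x, m) => rm R (θ x) m
  | (.app f ts, m) => rm R (.app f (ts.map fun t => nf R (t.subst θ))) m

/-- The `R`-normalization multiset `nm_R(C·θ)` of Definition 2 (Horn case). -/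
def nm (R : Set (Trm F V × Trm F V)) (C : Clause F V) (θ : V → Trm F V) :
    Multiset (Trm F V × ℕ) :=
  (lss C).sum (nmElt R θ) + (lts C).sum fun p => {(nf R (p.1.subst θ), p.2)}

/-- A closure `(C·θ)`. -/
abbrev Closure (F V : Type) := Clause F V × (V → Trm F V)

/-- The ground instance `Cθ` represented by a closure `(C·θ)`. -/
def Closure.inst (c : Closure F V) : Clause F V := Clause.subst c.2 c.1

def Closure.IsGround (c : Closure F V) : Prop := Clause.IsGround c.inst

/-- Equality of clauses up to bijective variable renaming. -/
def ClauseAlphaEq (C D : Clause F V) : Prop :=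
  ∃ ρ : V ≃ V, Clause.subst (fun x => Trm.var (ρ x)) C = D

/-- Identification of closures: equal up to bijective renaming (with the same
ground instance). -/
def CloAlphaEq (c d : Closure F V) : Prop := ClauseAlphaEq c.1 d.1 ∧ c.inst = d.inst

/-- The tie-breaking closure ordering `≻_Clo`: an arbitrary well-founded ordering on
ground closures, total on closures with the same ground instance, such that
`(C·θ₁) ≻_Clo (D·θ₂)` whenever `Cθ₁ = Dθ₂` and `D` is an instance of `C` but not
vice versa. -/
structure TieBreak (F V : Type) where
  gt : Closure F V → Closure F V → Prop
  wf : WellFounded fun a b : Closure F V => gt b a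
  total : ∀ c d : Closure F V, c.inst = d.inst → CloAlphaEq c d ∨ gt c d ∨ gt d c
  inst_gt : ∀ c d : Closure F V, c.inst = d.inst →
      (∃ σ, Clause.subst σ c.1 = d.1) → (¬ ∃ σ, Clause.subst σ d.1 = c.1) → gt c d

/-- Lexicographic combination of `≻` and `>` on labeled terms. -/
def lexGT (O : ReductionOrdering F V) (p q : Trm F V × ℕ) : Prop :=
  O.gt p.1 q.1 ∨ (p.1 = q.1 ∧ q.2 < p.2)

/-- The `R`-normalization closure ordering `≫_R` of Definition 2 (Horn case). -/
def cloGT (O : ReductionOrdering F V) (T : TieBreak F V) (R : Set (Trm F V × Trm F V))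
    (c d : Closure F V) : Prop :=
  MultGT (lexGT O) (nm R c.1 c.2) (nm R d.1 d.2)
  ∨ (nm R c.1 c.2 = nm R d.1 d.2 ∧ clauseGT O c.inst d.inst)
  ∨ (nm R c.1 c.2 = nm R d.1 d.2 ∧ c.inst = d.inst ∧ T.gt c d)

/-- Convertibility w.r.t. a set of ground equations: the congruence generated by `E`. -/
inductive Conv (E : Set (Trm F V × Trm F V)) : Trm F V → Trm F V → Prop
  | rel {s t : Trm F V} : (s, t) ∈ E → Conv E s t
  | refl (t : Trm F V) : Conv E t t
  | symm {s t : Trm F V} : Conv E s t → Conv E t s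
  | trans {s t u : Trm F V} : Conv E s t → Conv E t u → Conv E s u
  | congr {t t' : Trm F V} {f : F} {l r : List (Trm F V)} :
      Conv E t t' → Conv E (.app f (l ++ t :: r)) (.app f (l ++ t' :: r))

/-- Truth of a literal in the equality Herbrand interpretation generated by `E`. -/
def litTrue (E : Set (Trm F V × Trm F V)) : Lit F V → Prop
  | .pos s t => Conv E s t
  | .neg s t => ¬ Conv E s t

/-- Truth of a (ground) clause in the equality Herbrand interpretation generated by `E`. -/
def ModelsC (E : Set (Trm F V × Trm F V)) (D : Clause F V) : Prop := ∃ L ∈ D, litTrue E L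

/-- `R ⊨ (C·θ)`. -/
def Models (E : Set (Trm F V × Trm F V)) (c : Closure F V) : Prop := ModelsC E c.inst

/-- `σ` is an idempotent most general unifier of `s` and `s'`. -/
def IsMGU (σ : V → Trm F V) (s s' : Trm F V) : Prop :=
  s.subst σ = s'.subst σ ∧
  ∀ τ : V → Trm F V, s.subst τ = s'.subst τ → ∀ x, (σ x).subst τ = τ x

/-- Replacement of all occurrences of `u` by `v` in a term. -/
def replAll (u v : Trm F V) : Trm F V → Trm F V
  | .var x => if Trm.var x = u then v else .var x
  | .app f ts => if Trm.app f ts = u then v else .app f (ts.attach.map fun s => replAll u v s.1)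
decreasing_by
  have := List.sizeOf_lt_of_mem s.2
  simp only [Trm.app.sizeOf_spec]
  omega

/-- Replacement of all occurrences of `u` by `v` in a clause. -/
def Clause.replAll (u v : Trm F V) (C : Clause F V) : Clause F V :=
  C.map fun L => match L with
    | .pos s t => .pos (_root_.replAll u v s) (_root_.replAll u v t)
    | .neg s t => .neg (_root_.replAll u v s) (_root_.replAll u v t)

instance : DecidableEq V := Classical.decEq _

/-- Single-point substitution `{x ↦ t}`. -/
def single (x : V) (t : Trm F V) : V → Trm F V := fun y => if y = x then t else Trm.var y

/-- Ground inferences of the Ground Closure (Horn) Superposition Calculus.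
`eqres` is Equality Resolution, `ps1` is Parallel Superposition I (overlap at a
non-variable position `u`), `ps2` is Parallel Superposition II (overlap at or below
a variable `x`, with `xθ = u[tθ]` for a context `u`). -/
inductive GInf (F V : Type) : Type
  | eqres (C' : Clause F V) (s s' : Trm F V) (σ θ : V → Trm F V)
  | ps1 (D' : Clause F V) (t t' : Trm F V) (C : Clause F V) (u : Trm F V) (σ θ : V → Trm F V)
  | ps2 (D' : Clause F V) (t t' : Trm F V) (C : Clause F V) (x : V) (u : Ctx F V) (θ : V → Trm F V)

namespace GInf

/-- The conclusion of a ground inference. -/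
def concl : GInf F V → Closure F V
  | .eqres C' _ _ σ θ => (Clause.subst σ C', θ)
  | .ps1 D' _ t' C u σ θ => (Clause.subst σ (D' + Clause.replAll u t' C), θ)
  | .ps2 D' _ t' C x u θ => (D' + C, Function.update θ x (u.fill (t'.subst θ)))

/-- The right (or only) premise of a ground inference. -/
def rprem : GInf F V → Closure F V
  | .eqres C' s s' _ θ => (C' + {Lit.neg s s'}, θ)
  | .ps1 _ _ _ C _ _ θ => (C, θ)
  | .ps2 _ _ _ C _ _ θ => (C, θ)

/-- The left premise of a (Superposition) ground inference. -/
def lprem : GInf F V → Closure F V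
  | .eqres C' s s' _ θ => (C' + {Lit.neg s s'}, θ)
  | .ps1 D' t t' _ _ _ θ => (D' + {Lit.pos t t'}, θ)
  | .ps2 D' t t' _ _ _ θ => (D' + {Lit.pos t t'}, θ)

/-- The list of premises of a ground inference. -/
def prems : GInf F V → List (Closure F V)
  | .eqres C' s s' _ θ => [(C' + {Lit.neg s s'}, θ)]
  | .ps1 D' t t' C _ _ θ => [(D' + {Lit.pos t t'}, θ), (C, θ)]
  | .ps2 D' t t' C _ _ θ => [(D' + {Lit.pos t t'}, θ), (C, θ)]

/-- Is the inference a Superposition inference? -/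
def IsSup : GInf F V → Prop
  | .eqres _ _ _ _ _ => False
  | .ps1 _ _ _ _ _ _ _ => True
  | .ps2 _ _ _ _ _ _ _ => True

/-- For a Superposition inference with left premise `(D' ∨ t ≈ t' · θ)`:
the rule `tθ → t'θ` belongs to `R`. -/
def ruleIn (R : Set (Trm F V × Trm F V)) : GInf F V → Prop
  | .eqres _ _ _ _ _ => False
  | .ps1 _ t t' _ _ _ θ => (t.subst θ, t'.subst θ) ∈ R
  | .ps2 _ t t' _ _ _ θ => (t.subst θ, t'.subst θ) ∈ R

/-- Condition (iii) of Definition 5: a Superposition inference with left premise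
`(D' ∨ t ≈ t' · θ)` such that `tθ ≻ t'θ` and `(tθ → t'θ) ∉ R`. -/
def ruleNotIn (O : ReductionOrdering F V) (R : Set (Trm F V × Trm F V)) : GInf F V → Prop
  | .eqres _ _ _ _ _ => False
  | .ps1 _ t t' _ _ _ θ => O.gt (t.subst θ) (t'.subst θ) ∧ (t.subst θ, t'.subst θ) ∉ R
  | .ps2 _ t t' _ _ _ θ => O.gt (t.subst θ) (t'.subst θ) ∧ (t.subst θ, t'.subst θ) ∉ R

end GInf

/-- The common ordering side conditions of the Parallel Superposition rules, for a
left premise `D' ∨ t ≈ t'`, right premise `C`, overlapped term (or variable) `u`,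
under the ground substitution `θ`. -/
def SideConds (O : ReductionOrdering F V) (D' : Clause F V) (t t' : Trm F V)
    (C : Clause F V) (u : Trm F V) (θ : V → Trm F V) : Prop :=
  (u ∈ ssN C ∪ ssPp C →
     clauseGT O (Clause.subst θ C) (Clause.subst θ (D' + {Lit.pos t t'}))) ∧
  (∃ s s',
      (Lit.pos s s' ∈ C ∧ u ∈ s.subterms ∧ O.gt (s.subst θ) (s'.subst θ) ∧
        SMaxIn O (Lit.subst θ (Lit.pos s s')) (Clause.subst θ (C.erase (Lit.pos s s')))) ∨
      (Lit.neg s s' ∈ C ∧ u ∈ s.subterms ∧ O.gt (s.subst θ) (s'.subst θ) ∧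
        MaxIn O (Lit.subst θ (Lit.neg s s')) (Clause.subst θ (C.erase (Lit.neg s s'))))) ∧
  SMaxIn O (Lit.subst θ (Lit.pos t t')) (Clause.subst θ D') ∧
  O.gt (t.subst θ) (t'.subst θ)

/-- Validity of a ground inference: all side conditions of the corresponding rule of
the Ground Closure Horn Superposition Calculus hold. -/
def GInf.IsInf (O : ReductionOrdering F V) : GInf F V → Prop
  | .eqres C' s s' σ θ =>
      Closure.IsGround (C' + {Lit.neg s s'}, θ) ∧
      s.subst θ = s'.subst θ ∧ IsMGU σ s s' ∧
      MaxIn O (Lit.subst θ (Lit.neg s s')) (Clause.subst θ C')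
  | .ps1 D' t t' C u σ θ =>
      Closure.IsGround (D' + {Lit.pos t t'}, θ) ∧ Closure.IsGround (C, θ) ∧
      (¬ ∃ x, u = Trm.var x) ∧ t.subst θ = u.subst θ ∧ IsMGU σ t u ∧
      u ∈ allSub C ∧ SideConds O D' t t' C u θ
  | .ps2 D' t t' C x u θ =>
      Closure.IsGround (D' + {Lit.pos t t'}, θ) ∧ Closure.IsGround (C, θ) ∧
      Trm.var x ∈ allSub C ∧ θ x = u.fill (t.subst θ) ∧
      SideConds O D' t t' C (Trm.var x) θ

/-- Redundant closures (Definition 3). -/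
def RedC (O : ReductionOrdering F V) (T : TieBreak F V) (N : Set (Closure F V))
    (c : Closure F V) : Prop :=
  ∀ R, GoodRS O R → Models R c ∨ ∃ d ∈ N, cloGT O T R c d ∧ ¬ Models R d

/-- Redundant inferences (Definition 4). -/
def RedI (O : ReductionOrdering F V) (T : TieBreak F V) (N : Set (Closure F V))
    (ι : GInf F V) : Prop :=
  ∀ R, GoodRS O R →
    Models R ι.concl
    ∨ (∃ c ∈ N, cloGT O T R ι.rprem c ∧ ¬ Models R c)
    ∨ ι.ruleNotIn O R
    ∨ (ι.IsSup ∧ cloGT O T R ι.lprem ι.rprem)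

section Candidate

/-- `s` is a strictly maximal term of the ground clause `D` and occurs in `D` only
(at the top) in positive literals. -/
def StrictMaxTermPos (O : ReductionOrdering F V) (D : Clause F V) (s : Trm F V) : Prop :=
  (∀ w ∈ allSub D, w = s ∨ O.gt s w) ∧ s ∉ ssN D ∧ s ∉ ssPp D ∧ s ∈ tsP D

/-- The productivity conditions (Horn case) for the closure `(C' ∨ u ≈ u' · θ) ∈ N`
w.r.t. the partial interpretation `Rs`. -/
def ProdConds (O : ReductionOrdering F V) (N : Set (Closure F V))
    (Rs : Set (Trm F V × Trm F V)) (C' : Clause F V) (u u' : Trm F V)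
    (θ : V → Trm F V) : Prop :=
  (C' + {Lit.pos u u'}, θ) ∈ N ∧
  Closure.IsGround (C' + {Lit.pos u u'}, θ) ∧
  StrictMaxTermPos O (Clause.subst θ (C' + {Lit.pos u u'})) (u.subst θ) ∧
  Irred Rs (u.subst θ) ∧
  ¬ Models Rs (C' + {Lit.pos u u'}, θ) ∧
  O.gt (u.subst θ) (u'.subst θ)

/-- `(C' ∨ u ≈ u' · θ)` is the `≫_{Rs}`-smallest closure in `N` satisfying the
productivity conditions for the left-hand side `s`. -/
def ProducesFor (O : ReductionOrdering F V) (T : TieBreak F V) (N : Set (Closure F V))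
    (Rs : Set (Trm F V × Trm F V)) (s : Trm F V) (C' : Clause F V) (u u' : Trm F V)
    (θ : V → Trm F V) : Prop :=
  u.subst θ = s ∧ ProdConds O N Rs C' u u' θ ∧
  ∀ D' v v' θ', v.subst θ' = s → ProdConds O N Rs D' v v' θ' →
    (D' + {Lit.pos v v'}, θ') = (C' + {Lit.pos u u'}, θ) ∨
    cloGT O T Rs (D' + {Lit.pos v v'}, θ') (C' + {Lit.pos u u'}, θ)

/-- `R_s = ⋃_{t ≺ s} E_t`. -/
def Rbelow (O : ReductionOrdering F V) (E : Trm F V → Set (Trm F V × Trm F V))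
    (s : Trm F V) : Set (Trm F V × Trm F V) :=
  { p | ∃ t, O.gt s t ∧ p ∈ E t }

/-- `R_* = ⋃_t E_t`. -/
def Rstar (E : Trm F V → Set (Trm F V × Trm F V)) : Set (Trm F V × Trm F V) :=
  { p | ∃ t, p ∈ E t }

/-- `E` is the family of rule sets of the candidate interpretation constructed from `N`:
`E s = {s → u'θ}` for the `≫_{R_s}`-smallest productive closure for `s` if one
exists, and `E s = ∅` otherwise. -/
def IsCandidate (O : ReductionOrdering F V) (T : TieBreak F V) (N : Set (Closure F V))
    (E : Trm F V → Set (Trm F V × Trm F V)) : Prop :=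
  ∀ s : Trm F V,
    (∃ C' u u' θ, ProducesFor O T N (Rbelow O E s) s C' u u' θ ∧
        E s = {(s, u'.subst θ)})
    ∨ ((¬ ∃ C' u u' θ, ProducesFor O T N (Rbelow O E s) s C' u u' θ) ∧ E s = ∅)

/-- The closure `(C' ∨ u ≈ u' · θ)` produces the rule `uθ → u'θ` in the candidate
interpretation given by `E`. -/
def ProducesRule (O : ReductionOrdering F V) (T : TieBreak F V) (N : Set (Closure F V))
    (E : Trm F V → Set (Trm F V × Trm F V)) (C' : Clause F V) (u u' : Trm F V)
    (θ : V → Trm F V) : Prop :=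
  ProducesFor O T N (Rbelow O E (u.subst θ)) (u.subst θ) C' u u' θ ∧
  E (u.subst θ) = {(u.subst θ, u'.subst θ)}

end Candidate

section NonHorn

/-- The graph of the (non-Horn) `R`-redex multiset function `rm_R(t)` of Definition 7. -/
inductive RMn (R : Set (Trm F V × Trm F V)) :
    Trm F V → Multiset (Multiset (Trm F V)) → Prop
  | irred {t : Trm F V} : Irred R t → RMn R t 0
  | step {t t' u : Trm F V} {b : Bool} {S : Multiset (Multiset (Trm F V))} :
      RewAt R t t' u b → RMn R t' S → RMn R t (({u, u} : Multiset (Trm F V)) ::ₘ S)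

open Classical in
/-- The (non-Horn) `R`-redex multiset `rm_R(t)` (via choice). -/
def rmN (R : Set (Trm F V × Trm F V)) (t : Trm F V) : Multiset (Multiset (Trm F V)) :=
  if h : ∃ S, RMn R t S then h.choose else 0

/-- Contribution of one subterm of a negative literal to the non-Horn `nm_R(C·θ)`. -/
def nmNElt (R : Set (Trm F V × Trm F V)) (θ : V → Trm F V) :
    Trm F V → Multiset (Multiset (Trm F V))
  | .var x => rmN R (θ x)
  | .app f ts => rmN R (.app f (ts.map fun t => nf R (t.subst θ)))

/-- The non-Horn `R`-normalization multiset `nm_R(C·θ)` of Definition 8. -/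
def nmN (R : Set (Trm F V × Trm F V)) (C : Clause F V) (θ : V → Trm F V) :
    Multiset (Multiset (Trm F V)) :=
  (ssN C).sum (nmNElt R θ) +
  (tsN C).sum (fun t => {({nf R (t.subst θ), nf R (t.subst θ)} : Multiset (Trm F V))}) +
  (C.map fun L => match L with
     | .pos s s' => (({({s.subst θ, s'.subst θ} : Multiset (Trm F V))}) :
         Multiset (Multiset (Trm F V)))
     | .neg _ _ => 0).sum

/-- The non-Horn `R`-normalization closure ordering `≫_R` of Definition 8. -/
def cloGTN (O : ReductionOrdering F V) (T : TieBreak F V) (R : Set (Trm F V × Trm F V))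
    (c d : Closure F V) : Prop :=
  MultGT (MultGT O.gt) (nmN R c.1 c.2) (nmN R d.1 d.2)
  ∨ (nmN R c.1 c.2 = nmN R d.1 d.2 ∧ clauseGT O c.inst d.inst)
  ∨ (nmN R c.1 c.2 = nmN R d.1 d.2 ∧ c.inst = d.inst ∧ T.gt c d)

end NonHorn

section Lifting

/-- The set `G(N)` of ground closures of a set `N` of clauses. -/
def GClosures (N : Set (Clause F V)) : Set (Closure F V) :=
  { c | c.1 ∈ N ∧ c.IsGround }

/-- The ordering side conditions of the non-ground Parallel Superposition rule, for
left premise `D' ∨ t ≈ t'`, right premise `C`, overlapped non-variable subterm `u`,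
and mgu `σ`. -/
def NGSideConds (O : ReductionOrdering F V) (D' : Clause F V) (t t' : Trm F V)
    (C : Clause F V) (u : Trm F V) (σ : V → Trm F V) : Prop :=
  (u ∈ ssN C ∪ ssPp C →
     ¬ (clauseGT O (Clause.subst σ (D' + {Lit.pos t t'})) (Clause.subst σ C) ∨
        Clause.subst σ C = Clause.subst σ (D' + {Lit.pos t t'}))) ∧
  (∃ s s',
      (Lit.pos s s' ∈ C ∧ u ∈ s.subterms ∧
        ¬ (O.gt (s'.subst σ) (s.subst σ) ∨ s.subst σ = s'.subst σ) ∧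
        SMaxIn O (Lit.subst σ (Lit.pos s s')) (Clause.subst σ (C.erase (Lit.pos s s')))) ∨
      (Lit.neg s s' ∈ C ∧ u ∈ s.subterms ∧
        ¬ (O.gt (s'.subst σ) (s.subst σ) ∨ s.subst σ = s'.subst σ) ∧
        MaxIn O (Lit.subst σ (Lit.neg s s')) (Clause.subst σ (C.erase (Lit.neg s s'))))) ∧
  SMaxIn O (Lit.subst σ (Lit.pos t t')) (Clause.subst σ D') ∧
  ¬ (O.gt (t'.subst σ) (t.subst σ) ∨ t.subst σ = t'.subst σ)

/-- The ground inference `ι` is a ground instance of an inference of the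
(non-ground) Horn Superposition Calculus with Parallel Superposition whose
premises are exactly the clauses occurring in the premise closures of `ι`. -/
def IsGroundInstOfNG (O : ReductionOrdering F V) : GInf F V → Prop
  | .eqres C' s s' σ _ =>
      IsMGU σ s s' ∧
      MaxIn O (Lit.subst σ (Lit.neg s s')) (Clause.subst σ C')
  | .ps1 D' t t' C u σ _ =>
      (¬ ∃ x, u = Trm.var x) ∧ IsMGU σ t u ∧ u ∈ allSub C ∧
      NGSideConds O D' t t' C u σ
  | .ps2 _ _ _ _ _ _ _ => False

/-- Non-ground inferences of the Horn Superposition Calculus with Parallel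
Superposition. -/
inductive NGInf (F V : Type) : Type
  | eqres (C' : Clause F V) (s s' : Trm F V) (σ : V → Trm F V)
  | psup (D' : Clause F V) (t t' : Trm F V) (C : Clause F V) (u : Trm F V) (σ : V → Trm F V)

namespace NGInf

/-- Side conditions of the non-ground rules. -/
def IsInf (O : ReductionOrdering F V) : NGInf F V → Prop
  | .eqres C' s s' σ =>
      IsMGU σ s s' ∧ MaxIn O (Lit.subst σ (Lit.neg s s')) (Clause.subst σ C')
  | .psup D' t t' C u σ =>
      (¬ ∃ x, u = Trm.var x) ∧ IsMGU σ t u ∧ u ∈ allSub C ∧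
      NGSideConds O D' t t' C u σ

/-- Premises of a non-ground inference. -/
def prems : NGInf F V → List (Clause F V)
  | .eqres C' s s' _ => [C' + {Lit.neg s s'}]
  | .psup D' t t' C _ _ => [D' + {Lit.pos t t'}, C]

/-- Conclusion of a non-ground inference. -/
def concl : NGInf F V → Clause F V
  | .eqres C' _ _ σ => Clause.subst σ C'
  | .psup D' _ t' C u σ => Clause.subst σ (D' + Clause.replAll u t' C)

/-- The set `G(ι)` of ground instances of a non-ground inference. -/
def GInsts (O : ReductionOrdering F V) : NGInf F V → Set (GInf F V)
  | .eqres C' s s' σ => { g | ∃ θ, g = GInf.eqres C' s s' σ θ ∧ g.IsInf O }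
  | .psup D' t t' C u σ => { g | ∃ θ, g = GInf.ps1 D' t t' C u σ θ ∧ g.IsInf O }

end NGInf

end Lifting

section Lemma1Aux

variable {F V : Type}

private lemma rewAt_mono {R R' : Set (Trm F V × Trm F V)} (hss : R ⊆ R')
    {s t u : Trm F V} {b : Bool} (h : RewAt R s t u b) : RewAt R' s t u b := by
  induction h with
  | root hm => exact .root (hss hm)
  | congr _ ih => exact .congr ih

private lemma rewAt_single {R : Set (Trm F V × Trm F V)} {s t u : Trm F V} {b : Bool}
    (h : RewAt R s t u b) : ∃ v, (u, v) ∈ R ∧ RewAt {(u, v)} s t u b := by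
  induction h with
  | root hm => exact ⟨_, hm, .root rfl⟩
  | congr _ ih => obtain ⟨v, hv, hr⟩ := ih; exact ⟨v, hv, .congr hr⟩

private lemma rewAt_size {R : Set (Trm F V × Trm F V)} {s t u : Trm F V} {b : Bool}
    (h : RewAt R s t u b) : sizeOf u ≤ sizeOf s := by
  induction h with
  | root _ => exact le_refl _
  | @congr t t' u b f l r _ ih =>
    have h1 : sizeOf t < sizeOf (l ++ t :: r) := List.sizeOf_lt_of_mem (by simp)
    simp only [Trm.app.sizeOf_spec]
    omega

private lemma no_inner_rew {O : ReductionOrdering F V} {R : Set (Trm F V × Trm F V)}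
    (hR : GoodRS O R) {f : F} {l r : List (Trm F V)} {s s' u v : Trm F V} {b : Bool}
    (hmem : (Trm.app f (l ++ s :: r), v) ∈ R) (hs : RewAt R s s' u b) : False := by
  obtain ⟨v2, hv2, hs2⟩ := rewAt_single hs
  by_cases heq : ((u, v2) : Trm F V × Trm F V) = (Trm.app f (l ++ s :: r), v)
  · have h1 : sizeOf u ≤ sizeOf s := rewAt_size hs
    have h2 : sizeOf s < sizeOf (l ++ s :: r) := List.sizeOf_lt_of_mem (by simp)
    have h3 : u = Trm.app f (l ++ s :: r) := congrArg Prod.fst heq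
    have h4 : sizeOf u = sizeOf (Trm.app f (l ++ s :: r)) := by rw [h3]
    simp only [Trm.app.sizeOf_spec] at h4
    omega
  · have hsub : ({(u, v2)} : Set (Trm F V × Trm F V)) ⊆
        R \ {(Trm.app f (l ++ s :: r), v)} := by
      intro p hp
      rcases hp with rfl
      exact ⟨hv2, heq⟩
    exact hR.1 _ hmem _ ⟨u, false, .congr (rewAt_mono hsub hs2)⟩

private lemma list_middle {α : Type} : ∀ {l1 : List α} {r1 l2 r2 : List α} {a b : α},
    l1 ++ a :: r1 = l2 ++ b :: r2 →
    (l1 = l2 ∧ a = b ∧ r1 = r2) ∨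
    (∃ m, l2 = l1 ++ a :: m ∧ r1 = m ++ b :: r2) ∨
    (∃ m, l1 = l2 ++ b :: m ∧ r2 = m ++ a :: r1) := by
  intro l1
  induction l1 with
  | nil =>
    intro r1 l2 r2 a b h
    cases l2 with
    | nil => simp_all
    | cons c l2' =>
      simp only [List.nil_append, List.cons_append, List.cons.injEq] at h
      exact Or.inr (Or.inl ⟨l2', by simp [h.1, h.2], h.2⟩)
  | cons c l1' ih =>
    intro r1 l2 r2 a b h
    cases l2 with
    | nil =>
      simp only [List.cons_append, List.nil_append, List.cons.injEq] at h
      exact Or.inr (Or.inr ⟨l1', by simp [h.1], h.2.symm⟩)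
    | cons d l2' =>
      simp only [List.cons_append, List.cons.injEq] at h
      obtain ⟨rfl, h2⟩ := h
      rcases ih h2 with ⟨rfl, rfl, rfl⟩ | ⟨m, hm1, hm2⟩ | ⟨m, hm1, hm2⟩
      · exact Or.inl ⟨rfl, rfl, rfl⟩
      · exact Or.inr (Or.inl ⟨m, by simp [hm1], hm2⟩)
      · exact Or.inr (Or.inr ⟨m, by simp [hm1], hm2⟩)

private lemma gt_of_rewAt {O : ReductionOrdering F V} {R : Set (Trm F V × Trm F V)}
    (hR : GoodRS O R) {s t u : Trm F V} {b : Bool} (h : RewAt R s t u b) : O.gt s t := by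
  induction h with
  | root hm => exact (hR.2 _ hm).2.2
  | congr _ ih => exact O.compat_ctx _ _ _ ih

private lemma rewAt_cases {R : Set (Trm F V × Trm F V)} {t t2 u2 : Trm F V} {b2 : Bool}
    (h : RewAt R t t2 u2 b2) :
    (t = u2 ∧ b2 = true ∧ (u2, t2) ∈ R) ∨
    ∃ f l s r s' b', t = Trm.app f (l ++ s :: r) ∧ t2 = Trm.app f (l ++ s' :: r) ∧
      b2 = false ∧ RewAt R s s' u2 b' := by
  cases h with
  | root hm => exact Or.inl ⟨rfl, rfl, hm⟩
  | congr hs => exact Or.inr ⟨_, _, _, _, _, _, rfl, rfl, rfl, hs⟩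

private lemma rew_diamond {O : ReductionOrdering F V} {R : Set (Trm F V × Trm F V)}
    (hR : GoodRS O R) {t t1 t2 u1 u2 : Trm F V} {b1 b2 : Bool}
    (h1 : RewAt R t t1 u1 b1) (h2 : RewAt R t t2 u2 b2) :
    (t1 = t2 ∧ u1 = u2 ∧ b1 = b2) ∨
    (b1 = false ∧ b2 = false ∧
      ∃ t3, RewAt R t1 t3 u2 false ∧ RewAt R t2 t3 u1 false) := by
  induction h1 generalizing t2 u2 b2 with
  | @root u v hv =>
    cases h2 with
    | root hv2 =>
      by_cases hvv : v = t2
      · exact Or.inl ⟨hvv, rfl, rfl⟩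
      · exfalso
        have hne : ((u, t2) : Trm F V × Trm F V) ≠ (u, v) := by
          intro hpe; exact hvv (congrArg Prod.snd hpe).symm
        have hmem : ((u, t2) : Trm F V × Trm F V) ∈ R \ {(u, v)} := ⟨hv2, hne⟩
        exact hR.1 (u, v) hv _ ⟨u, true, .root hmem⟩
    | congr hs => exact (no_inner_rew hR hv hs).elim
  | @congr s s1 u1' b1' f l r hs1 ih =>
    rcases rewAt_cases h2 with ⟨heq, rfl, hmem⟩ |
        ⟨f2, l2, s2, r2, s2', b2', heq, rfl, rfl, hs2⟩
    · rw [← heq] at hmem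
      exact (no_inner_rew hR hmem hs1).elim
    · obtain ⟨rfl, hl⟩ : f = f2 ∧ l ++ s :: r = l2 ++ s2 :: r2 := by
        injection heq with e1 e2; exact ⟨e1, e2⟩
      rcases list_middle hl with ⟨rfl, rfl, rfl⟩ | ⟨m, rfl, rfl⟩ | ⟨m, rfl, rfl⟩
      · rcases ih hs2 with ⟨rfl, rfl, rfl⟩ | ⟨_, _, s3, ha, hb⟩
        · exact Or.inl ⟨rfl, rfl, rfl⟩
        · exact Or.inr ⟨rfl, rfl, Trm.app f (l ++ s3 :: r), .congr ha, .congr hb⟩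
      · refine Or.inr ⟨rfl, rfl, Trm.app f (l ++ s1 :: (m ++ s2' :: r2)), ?_, ?_⟩
        · have := RewAt.congr (f := f) (l := l ++ s1 :: m) (r := r2) hs2
          simpa only [List.append_assoc, List.cons_append] using this
        · have := RewAt.congr (f := f) (l := l) (r := m ++ s2' :: r2) hs1
          simpa only [List.append_assoc, List.cons_append] using this
      · refine Or.inr ⟨rfl, rfl, Trm.app f (l2 ++ s2' :: (m ++ s1 :: r)), ?_, ?_⟩
        · have := RewAt.congr (f := f) (l := l2) (r := m ++ s1 :: r) hs2
          simpa only [List.append_assoc, List.cons_append] using this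
        · have := RewAt.congr (f := f) (l := l2 ++ s2' :: m) (r := r) hs1
          simpa only [List.append_assoc, List.cons_append] using this

private lemma rm_exists {O : ReductionOrdering F V} {R : Set (Trm F V × Trm F V)}
    (hR : GoodRS O R) (t : Trm F V) (m : ℕ) : ∃ S, RM R t m S := by
  induction t using WellFounded.induction O.wf with
  | _ t ih =>
    by_cases h : Irred R t
    · exact ⟨0, .irred h⟩
    · simp only [Irred, not_forall, not_not] at h
      obtain ⟨t', u, b, hst⟩ := h
      obtain ⟨S, hS⟩ := ih t' (gt_of_rewAt hR hst)
      by_cases hb : b = true ∨ 0 < m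
      · exact ⟨_, .step_top hst hb hS⟩
      · push_neg at hb
        obtain ⟨hb1, hm⟩ := hb
        have hb0 : b = false := by cases b <;> simp_all
        have hm0 : m = 0 := by omega
        subst hb0; subst hm0
        exact ⟨_, .step_deep hst hS⟩

private lemma rm_unique {O : ReductionOrdering F V} {R : Set (Trm F V × Trm F V)}
    (hR : GoodRS O R) :
    ∀ t : Trm F V, ∀ m S S', RM R t m S → RM R t m S' → S = S' := by
  intro t
  induction t using WellFounded.induction O.wf with
  | _ t ih =>
  intro m S S' h1 h2
  cases h1 with
  | irred hirr =>
    cases h2 with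
    | irred _ => rfl
    | step_top hrw _ _ => exact absurd ⟨_, _, hrw⟩ (hirr _)
    | step_deep hrw _ => exact absurd ⟨_, _, hrw⟩ (hirr _)
  | @step_top _ t1 u1 b1 _ S1 hrw1 hc1 hS1 =>
    cases h2 with
    | irred hirr => exact absurd ⟨_, _, hrw1⟩ (hirr _)
    | @step_top _ t2 u2 b2 _ S2 hrw2 hc2 hS2 =>
      rcases rew_diamond hR hrw1 hrw2 with ⟨rfl, rfl, rfl⟩ | ⟨hb1, hb2, t3, h13, h23⟩
      · rw [ih t1 (gt_of_rewAt hR hrw1) m S1 S2 hS1 hS2]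
      · subst hb1; subst hb2
        have hm : 0 < m := hc1.resolve_left (by simp)
        obtain ⟨S3, hS3⟩ := rm_exists hR t3 m
        have e1 : S1 = (u2, m) ::ₘ S3 :=
          ih t1 (gt_of_rewAt hR hrw1) m _ _ hS1 (.step_top h13 (Or.inr hm) hS3)
        have e2 : S2 = (u1, m) ::ₘ S3 :=
          ih t2 (gt_of_rewAt hR hrw2) m _ _ hS2 (.step_top h23 (Or.inr hm) hS3)
        rw [e1, e2, Multiset.cons_swap]
    | @step_deep _ t2 u2 S2 hrw2 hS2 =>
      have hb1 : b1 = true := hc1.resolve_right (by omega)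
      rcases rew_diamond hR hrw1 hrw2 with ⟨rfl, rfl, hbb⟩ | ⟨hb, _, _⟩
      · simp [hb1] at hbb
      · simp [hb1] at hb
  | @step_deep _ t1 u1 S1 hrw1 hS1 =>
    cases h2 with
    | irred hirr => exact absurd ⟨_, _, hrw1⟩ (hirr _)
    | @step_top _ t2 u2 b2 _ S2 hrw2 hc2 hS2 =>
      have hb2 : b2 = true := hc2.resolve_right (by omega)
      rcases rew_diamond hR hrw1 hrw2 with ⟨rfl, rfl, hbb⟩ | ⟨_, hb, _⟩
      · simp [hb2] at hbb
      · simp [hb2] at hb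
    | @step_deep _ t2 u2 S2 hrw2 hS2 =>
      rcases rew_diamond hR hrw1 hrw2 with ⟨rfl, rfl, _⟩ | ⟨_, _, t3, h13, h23⟩
      · rw [ih t1 (gt_of_rewAt hR hrw1) 0 S1 S2 hS1 hS2]
      · obtain ⟨S3, hS3⟩ := rm_exists hR t3 0
        have e1 : S1 = (u2, 1) ::ₘ S3 :=
          ih t1 (gt_of_rewAt hR hrw1) 0 _ _ hS1 (.step_deep h13 hS3)
        have e2 : S2 = (u1, 1) ::ₘ S3 :=
          ih t2 (gt_of_rewAt hR hrw2) 0 _ _ hS2 (.step_deep h23 hS3)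
        rw [e1, e2, Multiset.cons_swap]

end Lemma1Aux

/-- Lemma 1: for every left-reduced ground rewrite system `R` contained
in the reduction ordering `≻`, every ground term `t`, and every label `m ∈ {0,1,2}`,
the recursive specification of the labeled `R`-redex multiset `rm_R(t,m)` assigns to
`(t,m)` exactly one multiset, independently of the choice of rewrite steps. -/
theorem rm_well_defined {F V : Type} (O : ReductionOrdering F V)
    (R : Set (Trm F V × Trm F V)) (hR : GoodRS O R) :
    ∀ t : Trm F V, t.IsGround → ∀ m : ℕ, m ≤ 2 → ∃! S, RM R t m S := by
  intro t _ m _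
  obtain ⟨S, hS⟩ := rm_exists hR t m
  exact ⟨S, hS, fun S' h' => rm_unique hR t m S' S h' hS⟩
end
end

section
/- Let ι be a ground Equality Resolution inference of the Ground Closure Horn Superposition Calculus, with premise (C' ∨ s ≉ s' · θ) (where sθ = s'θ, σ = mgu(s,s'), and (s ≉ s')θ is maximal in (C' ∨ s ≉ s')θ) and conclusion (C'σ · θ). Then for every left-reduced ground rewrite system R contained in ≻, the conclusion is ≫_R-smaller than the premise: (C'σ · θ) ≪_R (C' ∨ s ≉ s' · θ). -/
/- Common infrastructure: first-order terms, clauses, ground rewrite systems,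
   reduction orderings, the (Horn and non-Horn) R-normalization closure orderings,
   the Ground Closure (Horn) Superposition Calculus and its redundancy criterion,
   and the candidate interpretation construction, following Waldmann,
   "On the (In-)Completeness of Destructive Equality Resolution in the
   Superposition Calculus". -/

set_option autoImplicit false
set_option maxHeartbeats 1000000

noncomputable section

variable {F V : Type}

set_option autoImplicit false
set_option maxHeartbeats 1000000
open Trm

variable {F V : Type}

theorem Trm.subst_app (θ : V → Trm F V) (f : F) (ts : List (Trm F V)) :
    (Trm.app f ts).subst θ = Trm.app f (ts.map (Trm.subst θ)) := by
  rw [Trm.subst]; congr 1; exact List.attach_map_val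

theorem Trm.subst_var (θ : V → Trm F V) (x : V) : (Trm.var x : Trm F V).subst θ = θ x := by rw [Trm.subst]

theorem Trm.subst_subst (σ θ : V → Trm F V) :
    ∀ t : Trm F V, (t.subst σ).subst θ = t.subst (fun x => (σ x).subst θ)
  | .var x => by rw [Trm.subst_var, Trm.subst_var]
  | .app f ts => by
      rw [Trm.subst_app, Trm.subst_app, Trm.subst_app, List.map_map]
      congr 1
      refine List.map_congr_left (fun t ht => ?_)
      exact Trm.subst_subst σ θ t
termination_by t => sizeOf t
decreasing_by
  have := List.sizeOf_lt_of_mem ht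
  simp only [Trm.app.sizeOf_spec]
  omega

-- subterms membership
theorem Trm.subterms_var (x : V) : (Trm.var x : Trm F V).subterms = {Trm.var x} := by
  rw [Trm.subterms]

theorem mem_foldr_union {α : Type} [DecidableEq α] (a : α) (l : List (Finset α)) :
    a ∈ l.foldr (· ∪ ·) ∅ ↔ ∃ s ∈ l, a ∈ s := by
  induction l with
  | nil => simp
  | cons h t ih => simp [ih]

theorem Trm.mem_subterms_app {v : Trm F V} {f : F} {ts : List (Trm F V)} :
    v ∈ (Trm.app f ts).subterms ↔ v = Trm.app f ts ∨ ∃ t ∈ ts, v ∈ t.subterms := by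
  rw [Trm.subterms]
  rw [Finset.mem_insert, mem_foldr_union]
  constructor
  · rintro (h | ⟨sf, hsf, hv⟩)
    · exact Or.inl h
    · obtain ⟨a, ha, rfl⟩ := List.mem_map.1 hsf
      exact Or.inr ⟨a.1, a.2, hv⟩
  · rintro (h | ⟨t, ht, hv⟩)
    · exact Or.inl h
    · refine Or.inr ⟨Trm.subterms t, List.mem_map.2 ⟨⟨t, ht⟩, List.mem_attach _ _, rfl⟩, hv⟩

theorem Trm.psubterms_var (x : V) : (Trm.var x : Trm F V).psubterms = ∅ := by
  rw [Trm.psubterms]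

theorem Trm.mem_psubterms_app {v : Trm F V} {f : F} {ts : List (Trm F V)} :
    v ∈ (Trm.app f ts).psubterms ↔ ∃ t ∈ ts, v ∈ t.subterms := by
  rw [Trm.psubterms]
  simp only [mem_foldr_union, List.mem_map]
  constructor
  · rintro ⟨s, ⟨t, ht, rfl⟩, hv⟩; exact ⟨t, ht, hv⟩
  · rintro ⟨t, ht, hv⟩; exact ⟨t.subterms, ⟨t, ht, rfl⟩, hv⟩

theorem Trm.mem_subterms_iff {v t : Trm F V} :
    v ∈ t.subterms ↔ v = t ∨ v ∈ t.psubterms := by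
  cases t with
  | var x => simp [Trm.subterms_var, Trm.psubterms_var]
  | app f ts => simp [Trm.mem_subterms_app, Trm.mem_psubterms_app]

theorem Trm.self_mem_subterms (t : Trm F V) : t ∈ t.subterms :=
  Trm.mem_subterms_iff.2 (Or.inl rfl)

theorem Trm.sizeOf_le_of_mem_subterms : ∀ {t v : Trm F V}, v ∈ t.subterms → sizeOf v ≤ sizeOf t := by
  intro t
  induction t using Trm.subterms.induct with
  | case1 x =>
      intro v hv; rw [Trm.subterms_var, Finset.mem_singleton] at hv; exact le_of_eq (by rw [hv])
  | case2 f ts ih =>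
      intro v hv
      rcases Trm.mem_subterms_app.1 hv with rfl | ⟨t, ht, hv⟩
      · exact le_rfl
      · have h1 : sizeOf v ≤ sizeOf t := ih ⟨t, ht⟩ hv
        have := List.sizeOf_lt_of_mem ht
        simp only [Trm.app.sizeOf_spec]
        omega

theorem Trm.sizeOf_lt_of_mem_psubterms {t v : Trm F V} (h : v ∈ t.psubterms) :
    sizeOf v < sizeOf t := by
  cases t with
  | var x => rw [Trm.psubterms_var] at h; exact absurd h (Finset.notMem_empty v)
  | app f ts =>
      rcases Trm.mem_psubterms_app.1 h with ⟨t, ht, hv⟩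
      have h1 := Trm.sizeOf_le_of_mem_subterms hv
      have := List.sizeOf_lt_of_mem ht
      simp only [Trm.app.sizeOf_spec]
      omega

theorem Trm.subterms_trans {w v t : Trm F V} (h1 : w ∈ v.subterms) (h2 : v ∈ t.subterms) :
    w ∈ t.subterms := by
  induction t using Trm.subterms.induct with
  | case1 x =>
      rw [Trm.subterms_var, Finset.mem_singleton] at h2; subst h2
      rw [Trm.subterms_var, Finset.mem_singleton] at h1 ⊢
      exact h1
  | case2 f ts ih =>
      rcases Trm.mem_subterms_app.1 h2 with rfl | ⟨t, ht, hv⟩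
      · exact h1
      · exact Trm.mem_subterms_app.2 (Or.inr ⟨t, ht, ih ⟨t, ht⟩ hv⟩)

section Rew
variable {O : ReductionOrdering F V} {R : Set (Trm F V × Trm F V)}

theorem RewAt.gt (hR : GoodRS O R) : ∀ {t t' u : Trm F V} {b : Bool},
    RewAt R t t' u b → O.gt t t' := by
  intro t t' u b h
  induction h with
  | root hmem => exact (hR.2 _ hmem).2.2
  | congr h ih => exact O.compat_ctx _ _ _ ih

theorem Step.gt (hR : GoodRS O R) {t t' : Trm F V} (h : Step R t t') : O.gt t t' := by
  obtain ⟨u, b, h⟩ := h; exact h.gt hR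

theorem wf_step (hR : GoodRS O R) : WellFounded (fun a b : Trm F V => Step R b a) :=
  Subrelation.wf (fun h => Step.gt hR h) O.wf

theorem RewAt.sizeOf_le : ∀ {t t' u : Trm F V} {b : Bool},
    RewAt R t t' u b → sizeOf u ≤ sizeOf t := by
  intro t t' u b h
  induction h with
  | root _ => exact le_rfl
  | @congr t t' u b f l r h ih =>
      have : t ∈ l ++ t :: r := by simp
      have := List.sizeOf_lt_of_mem this
      simp only [Trm.app.sizeOf_spec]
      omega

theorem RewAt.rule : ∀ {t t' u : Trm F V} {b : Bool},
    RewAt R t t' u b → ∃ v, (u, v) ∈ R ∧ RewAt {(u, v)} t t' u b := by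
  intro t t' u b h
  induction h with
  | @root u v hmem => exact ⟨v, hmem, RewAt.root rfl⟩
  | congr h ih =>
      obtain ⟨v, hv, h'⟩ := ih
      exact ⟨v, hv, h'.congr⟩

theorem RewAt.mono {S S' : Set (Trm F V × Trm F V)} (hss : S ⊆ S') :
    ∀ {t t' u : Trm F V} {b : Bool}, RewAt S t t' u b → RewAt S' t t' u b := by
  intro t t' u b h
  induction h with
  | root hmem => exact RewAt.root (hss hmem)
  | congr h ih => exact ih.congr

theorem exists_reachNF (hR : GoodRS O R) (t : Trm F V) : ∃ c, ReachNF R t c := by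
  induction t using (wf_step hR).induction with
  | _ t ih =>
    by_cases h : Irred R t
    · exact ⟨t, Relation.ReflTransGen.refl, h⟩
    · rw [Irred] at h
      push_neg at h
      obtain ⟨t', ht'⟩ := h
      obtain ⟨c, hc1, hc2⟩ := ih t' ht'
      exact ⟨c, Relation.ReflTransGen.head ht' hc1, hc2⟩

theorem nf_reach (hR : GoodRS O R) (t : Trm F V) : ReachNF R t (nf R t) := by
  have h : ∃ c, ReachNF R t c := exists_reachNF hR t
  rw [nf, dif_pos h]
  exact h.choose_spec

end Rew

section RMsec
variable {O : ReductionOrdering F V} {R : Set (Trm F V × Trm F V)}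

theorem list_split {α : Type} : ∀ {l1 r1 l2 r2 : List α} {a1 a2 : α},
    l1 ++ a1 :: r1 = l2 ++ a2 :: r2 →
    (l1 = l2 ∧ a1 = a2 ∧ r1 = r2) ∨
    (∃ mid, l2 = l1 ++ a1 :: mid ∧ r1 = mid ++ a2 :: r2) ∨
    (∃ mid, l1 = l2 ++ a2 :: mid ∧ r2 = mid ++ a1 :: r1) := by
  intro l1
  induction l1 with
  | nil =>
      intro r1 l2 r2 a1 a2 h
      cases l2 with
      | nil =>
          simp only [List.nil_append, List.cons.injEq] at h
          exact Or.inl ⟨rfl, h.1, h.2⟩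
      | cons b l2' =>
          simp only [List.nil_append, List.cons_append, List.cons.injEq] at h
          obtain ⟨rfl, h2⟩ := h
          exact Or.inr (Or.inl ⟨l2', by simp, h2⟩)
  | cons b l1' ih =>
      intro r1 l2 r2 a1 a2 h
      cases l2 with
      | nil =>
          simp only [List.cons_append, List.nil_append, List.cons.injEq] at h
          obtain ⟨rfl, h2⟩ := h
          exact Or.inr (Or.inr ⟨l1', by simp, h2.symm⟩)
      | cons c l2' =>
          simp only [List.cons_append, List.cons.injEq] at h
          obtain ⟨rfl, h2⟩ := h
          rcases ih h2 with ⟨rfl, rfl, rfl⟩ | ⟨mid, h3, h4⟩ | ⟨mid, h3, h4⟩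
          · exact Or.inl ⟨rfl, rfl, rfl⟩
          · exact Or.inr (Or.inl ⟨mid, by rw [h3]; simp, h4⟩)
          · exact Or.inr (Or.inr ⟨mid, by rw [h3]; simp, h4⟩)


set_option autoImplicit false
set_option maxHeartbeats 1000000
open Trm

variable {F V : Type}

section RMsec
variable {O : ReductionOrdering F V} {R : Set (Trm F V × Trm F V)}

theorem trm_sizeOf_pos (t : Trm F V) : 0 < sizeOf t := by
  cases t <;> simp only [Trm.var.sizeOf_spec, Trm.app.sizeOf_spec] <;> omega

theorem rew_commute_aux (hLR : LeftReduced R) :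
    ∀ (n : ℕ) (t : Trm F V), sizeOf t ≤ n → ∀ {t1 t2 u1 u2 : Trm F V} {b1 b2 : Bool},
    RewAt R t t1 u1 b1 → RewAt R t t2 u2 b2 →
    (t1 = t2 ∧ u1 = u2 ∧ b1 = b2) ∨
    (b1 = false ∧ b2 = false ∧ ∃ t3, RewAt R t1 t3 u2 false ∧ RewAt R t2 t3 u1 false) := by
  intro n
  induction n with
  | zero => intro t ht; exact absurd ht (by have := trm_sizeOf_pos t; omega)
  | succ n ihn => ?_
  intro t hsz t1 t2 u1 u2 b1 b2 h1 h2
  cases h1 with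
  | root hmem1 =>
      cases h2 with
      | root hmem2 =>
          by_cases hv : t1 = t2
          · exact Or.inl ⟨hv, rfl, rfl⟩
          · exfalso
            refine hLR (t, t1) hmem1 t2 ⟨t, true, ?_⟩
            refine RewAt.mono ?_ (RewAt.root (u := t) (v := t2) rfl)
            intro p hp
            have hp' : (t, t2) = p := hp
            subst hp'
            refine ⟨hmem2, fun hc => hv ?_⟩
            have hc' : (t, t2) = (t, t1) := hc
            exact (congrArg Prod.snd hc').symm
      | congr h2' =>
          rename_i a a' b' f l r
          exfalso
          obtain ⟨v2, hv2, h3⟩ := h2'.rule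
          have hne : (u2, v2) ≠ (Trm.app f (l ++ a :: r), t1) := by
            intro hEq
            have h4 : sizeOf u2 ≤ sizeOf a := h2'.sizeOf_le
            have h5 : a ∈ l ++ a :: r := by simp
            have h6 := List.sizeOf_lt_of_mem h5
            have h7 : u2 = Trm.app f (l ++ a :: r) := congrArg Prod.fst hEq
            rw [h7] at h4
            simp only [Trm.app.sizeOf_spec] at h4
            omega
          refine hLR (Trm.app f (l ++ a :: r), t1) hmem1 (Trm.app f (l ++ a' :: r)) ⟨u2, false, ?_⟩
          refine RewAt.mono (fun p hp => ?_) (RewAt.congr (f := f) (l := l) (r := r) h3)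
          simp only [Set.mem_singleton_iff] at hp
          subst hp
          exact ⟨hv2, hne⟩
  | congr h1' =>
      rename_i a1 a1' b1' f l1 r1
      generalize hT : Trm.app f (l1 ++ a1 :: r1) = T at h2
      cases h2 with
      | root hmem2 =>
          exfalso
          subst hT
          obtain ⟨v1, hv1, h3⟩ := h1'.rule
          have hne : (u1, v1) ≠ (Trm.app f (l1 ++ a1 :: r1), t2) := by
            intro hEq
            have h4 : sizeOf u1 ≤ sizeOf a1 := h1'.sizeOf_le
            have h5 : a1 ∈ l1 ++ a1 :: r1 := by simp
            have h6 := List.sizeOf_lt_of_mem h5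
            have h7 : u1 = Trm.app f (l1 ++ a1 :: r1) := congrArg Prod.fst hEq
            rw [h7] at h4
            simp only [Trm.app.sizeOf_spec] at h4
            omega
          refine hLR (Trm.app f (l1 ++ a1 :: r1), t2) hmem2 (Trm.app f (l1 ++ a1' :: r1)) ⟨u1, false, ?_⟩
          refine RewAt.mono (fun p hp => ?_) (RewAt.congr (f := f) (l := l1) (r := r1) h3)
          simp only [Set.mem_singleton_iff] at hp
          subst hp
          exact ⟨hv1, hne⟩
      | congr h2' =>
          rename_i a2 a2' b2' f2 l2 r2
          injection hT with hf hargs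
          subst hf
          rcases list_split hargs with ⟨rfl, rfl, rfl⟩ | ⟨mid, rfl, rfl⟩ | ⟨mid, rfl, rfl⟩
          · have hrec : sizeOf a1 ≤ n := by
              have h5 : a1 ∈ l1 ++ a1 :: r1 := by simp
              have := List.sizeOf_lt_of_mem h5
              simp only [Trm.app.sizeOf_spec] at hsz
              omega
            rcases ihn a1 hrec h1' h2' with ⟨rfl, rfl, rfl⟩ | ⟨hb1, hb2, t3, hs1, hs2⟩
            · exact Or.inl ⟨rfl, rfl, rfl⟩
            · exact Or.inr ⟨rfl, rfl, Trm.app f (l1 ++ t3 :: r1),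
                RewAt.congr hs1, RewAt.congr hs2⟩
          · refine Or.inr ⟨rfl, rfl, Trm.app f (l1 ++ a1' :: (mid ++ a2' :: r2)), ?_, ?_⟩
            · have := RewAt.congr (f := f) (l := l1 ++ a1' :: mid) (r := r2) h2'
              simpa using this
            · have := RewAt.congr (f := f) (l := l1) (r := mid ++ a2' :: r2) h1'
              simpa using this
          · refine Or.inr ⟨rfl, rfl, Trm.app f (l2 ++ a2' :: (mid ++ a1' :: r1)), ?_, ?_⟩
            · have := RewAt.congr (f := f) (l := l2) (r := mid ++ a1' :: r1) h2'
              simpa using this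
            · have := RewAt.congr (f := f) (l := l2 ++ a2' :: mid) (r := r1) h1'
              simpa using this

theorem rew_commute (hLR : LeftReduced R) {t t1 t2 u1 u2 : Trm F V} {b1 b2 : Bool}
    (h1 : RewAt R t t1 u1 b1) (h2 : RewAt R t t2 u2 b2) :
    (t1 = t2 ∧ u1 = u2 ∧ b1 = b2) ∨
    (b1 = false ∧ b2 = false ∧ ∃ t3, RewAt R t1 t3 u2 false ∧ RewAt R t2 t3 u1 false) :=
  rew_commute_aux hLR (sizeOf t) t le_rfl h1 h2

theorem RM_exists (hR : GoodRS O R) (t : Trm F V) (m : ℕ) : ∃ S, RM R t m S := by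
  induction t using (wf_step hR).induction with
  | _ t ih =>
    by_cases h : Irred R t
    · exact ⟨0, RM.irred h⟩
    · rw [Irred] at h
      push_neg at h
      obtain ⟨t', u, b, hrew⟩ := h
      obtain ⟨S, hS⟩ := ih t' ⟨u, b, hrew⟩
      by_cases hm : b = true ∨ 0 < m
      · exact ⟨(u, m) ::ₘ S, RM.step_top hrew hm hS⟩
      · push_neg at hm
        obtain ⟨hb, hm0⟩ := hm
        have hb' : b = false := by cases b; rfl; exact absurd rfl hb
        have hm0' : m = 0 := by omega
        subst hb' hm0'
        exact ⟨(u, 1) ::ₘ S, RM.step_deep hrew hS⟩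

theorem RM_unique (hR : GoodRS O R) (hLR : LeftReduced R) :
    ∀ (t : Trm F V) {m : ℕ} {S S' : Multiset (Trm F V × ℕ)},
    RM R t m S → RM R t m S' → S = S' := by
  intro t
  induction t using (wf_step hR).induction with
  | _ t ih =>
    intro m S S' hS hS'
    -- extract step data from each
    rcases hS with hirr | @⟨t, t1, u1, b1, m, S1, hrew1, hcond1, hS1⟩ | @⟨t, t1, u1, S1, hrew1, hS1⟩
    · rcases hS' with hirr' | @⟨t, t2, u2, b2, m, S2, hrew2, hcond2, hS2⟩ | @⟨t, t2, u2, S2, hrew2, hS2⟩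
      · rfl
      · exact absurd ⟨u2, b2, hrew2⟩ (hirr t2)
      · exact absurd ⟨u2, false, hrew2⟩ (hirr t2)
    · rcases hS' with hirr' | @⟨t, t2, u2, b2, m, S2, hrew2, hcond2, hS2⟩ | @⟨t, t2, u2, S2, hrew2, hS2⟩
      · exact absurd ⟨u1, b1, hrew1⟩ (hirr' t1)
      · -- step_top / step_top
        rcases rew_commute hLR hrew1 hrew2 with ⟨rfl, rfl, rfl⟩ | ⟨hb1, hb2, t3, hs1, hs2⟩
        · rw [ih t1 ⟨u1, b1, hrew1⟩ hS1 hS2]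
        · obtain ⟨S3, hS3⟩ := RM_exists hR t3 m
          have hmpos : 0 < m := by
            rcases hcond1 with h | h
            · rw [hb1] at h; exact absurd h (by simp)
            · exact h
          have e1 : S1 = (u2, m) ::ₘ S3 :=
            ih t1 ⟨u1, b1, hrew1⟩ hS1 (RM.step_top hs1 (Or.inr hmpos) hS3)
          have e2 : S2 = (u1, m) ::ₘ S3 :=
            ih t2 ⟨u2, b2, hrew2⟩ hS2 (RM.step_top hs2 (Or.inr hmpos) hS3)
          rw [e1, e2, Multiset.cons_swap]
      · -- step_top / step_deep (m = 0)
        rcases rew_commute hLR hrew1 hrew2 with ⟨rfl, rfl, rfl⟩ | ⟨hb1, hb2, t3, hs1, hs2⟩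
        · -- b1 = false, so cond1 gives 0 < 0
          rcases hcond1 with h | h
          · exact absurd h (by simp)
          · exact absurd h (by simp)
        · rcases hcond1 with h | h
          · exact absurd (hb1 ▸ h) (by simp)
          · exact absurd h (by simp)
    · rcases hS' with hirr' | @⟨t, t2, u2, b2, m2, S2, hrew2, hcond2, hS2⟩ | @⟨t, t2, u2, S2, hrew2, hS2⟩
      · exact absurd ⟨u1, false, hrew1⟩ (hirr' t1)
      · rcases rew_commute hLR hrew1 hrew2 with ⟨rfl, rfl, rfl⟩ | ⟨hb1, hb2, t3, hs1, hs2⟩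
        · rcases hcond2 with h | h
          · exact absurd h (by simp)
          · exact absurd h (by simp)
        · rcases hcond2 with h | h
          · exact absurd (hb2 ▸ h) (by simp)
          · exact absurd h (by simp)
      · -- step_deep / step_deep
        rcases rew_commute hLR hrew1 hrew2 with ⟨rfl, rfl, -⟩ | ⟨hb1, hb2, t3, hs1, hs2⟩
        · rw [ih t1 ⟨u1, false, hrew1⟩ hS1 hS2]
        · obtain ⟨S3, hS3⟩ := RM_exists hR t3 0
          have e1 : S1 = (u2, 1) ::ₘ S3 :=
            ih t1 ⟨u1, false, hrew1⟩ hS1 (RM.step_deep hs1 hS3)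
          have e2 : S2 = (u1, 1) ::ₘ S3 :=
            ih t2 ⟨u2, false, hrew2⟩ hS2 (RM.step_deep hs2 hS3)
          rw [e1, e2, Multiset.cons_swap]

theorem rm_spec (hR : GoodRS O R) (t : Trm F V) (m : ℕ) : RM R t m (rm R t m) := by
  have h : ∃ S, RM R t m S := RM_exists hR t m
  rw [rm, dif_pos h]
  exact h.choose_spec

theorem rm_eq (hR : GoodRS O R) (hLR : LeftReduced R) {t : Trm F V} {m : ℕ}
    {S : Multiset (Trm F V × ℕ)} (h : RM R t m S) : rm R t m = S :=
  RM_unique hR hLR t (rm_spec hR t m) h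

end RMsec

set_option autoImplicit false
set_option maxHeartbeats 1000000
open Trm

variable {F V : Type}

/-- `Cover r n m`: `n = c + y`, `m = c + x`, and every element of `y` is dominated by
an element of `x`. -/
def Cover {α : Type} (r : α → α → Prop) (n m : Multiset α) : Prop :=
  ∃ c y x, n = c + y ∧ m = c + x ∧ ∀ b ∈ y, ∃ a ∈ x, r a b

namespace Cover
variable {α : Type} {r : α → α → Prop}

theorem refl (n : Multiset α) : Cover r n n := ⟨n, 0, 0, by simp, by simp, by simp⟩

theorem zero (m : Multiset α) : Cover r 0 m := ⟨0, 0, m, by simp, by simp, by simp⟩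

theorem add {n m n' m' : Multiset α} (h : Cover r n m) (h' : Cover r n' m') :
    Cover r (n + n') (m + m') := by
  obtain ⟨c, y, x, rfl, rfl, hd⟩ := h
  obtain ⟨c', y', x', rfl, rfl, hd'⟩ := h'
  refine ⟨c + c', y + y', x + x', by abel, by abel, ?_⟩
  intro b hb
  rcases Multiset.mem_add.1 hb with hb | hb
  · obtain ⟨a, ha, hr⟩ := hd b hb
    exact ⟨a, Multiset.mem_add.2 (Or.inl ha), hr⟩
  · obtain ⟨a, ha, hr⟩ := hd' b hb
    exact ⟨a, Multiset.mem_add.2 (Or.inr ha), hr⟩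

theorem add_right {n m : Multiset α} (e : Multiset α) (h : Cover r n m) :
    Cover r n (m + e) := by
  obtain ⟨c, y, x, rfl, rfl, hd⟩ := h
  refine ⟨c, y, x + e, rfl, by abel, ?_⟩
  intro b hb
  obtain ⟨a, ha, hr⟩ := hd b hb
  exact ⟨a, Multiset.mem_add.2 (Or.inl ha), hr⟩

theorem of_le {n m : Multiset α} (h : n ≤ m) : Cover r n m := by
  obtain ⟨x, rfl⟩ := Multiset.le_iff_exists_add.1 h
  exact ⟨n, 0, x, by simp, rfl, by simp⟩

theorem dom {n m : Multiset α} (h : ∀ b ∈ n, ∃ a ∈ m, r a b) : Cover r n m :=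
  ⟨0, n, m, by simp, by simp, h⟩

theorem cons {a b : α} {n m : Multiset α} (hab : a = b ∨ r b a) (h : Cover r n m) :
    Cover r (a ::ₘ n) (b ::ₘ m) := by
  obtain ⟨c, y, x, rfl, rfl, hd⟩ := h
  rcases hab with rfl | hr
  · exact ⟨a ::ₘ c, y, x, by simp [Multiset.cons_add], by simp [Multiset.cons_add], hd⟩
  · refine ⟨c, a ::ₘ y, b ::ₘ x, ?_, ?_, ?_⟩
    · rw [Multiset.add_cons]
    · rw [Multiset.add_cons]
    · intro b1 hb1
      rcases Multiset.mem_cons.1 hb1 with rfl | hb1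
      · exact ⟨b, Multiset.mem_cons_self _ _, hr⟩
      · obtain ⟨a1, ha1, hra⟩ := hd b1 hb1
        exact ⟨a1, Multiset.mem_cons_of_mem ha1, hra⟩

theorem eq_or_multGT {n m : Multiset α} (h : Cover r n m) : m = n ∨ MultGT r m n := by
  obtain ⟨c, y, x, rfl, rfl, hd⟩ := h
  by_cases hy : y = 0
  · subst hy
    by_cases hx : x = 0
    · subst hx; exact Or.inl rfl
    · exact Or.inr ⟨x, 0, c, rfl, by simp, hx, by simp⟩
  · refine Or.inr ⟨x, y, c, rfl, rfl, ?_, hd⟩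
    obtain ⟨b, hb⟩ := Multiset.exists_mem_of_ne_zero hy
    obtain ⟨a, ha, -⟩ := hd b hb
    intro hx0
    rw [hx0] at ha
    exact absurd ha (Multiset.notMem_zero a)

end Cover

section RMCover
variable {O : ReductionOrdering F V} {R : Set (Trm F V × Trm F V)}

/-- Mirror a derivation at a different mode, with labels covered. -/
theorem RM_cover_exists {g : Trm F V} {m : ℕ} {S : Multiset (Trm F V × ℕ)}
    (hS : RM R g m S) (m' : ℕ) (hm : m ≤ m') :
    ∃ S', RM R g m' S' ∧ Cover (lexGT O) S S' := by
  induction hS with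
  | irred h => exact ⟨0, RM.irred h, Cover.refl 0⟩
  | @step_top t t' u b mm SS hrew hcond hSS ih =>
      obtain ⟨S', hS', hc⟩ := ih hm
      by_cases hm' : 0 < m'
      · refine ⟨(u, m') ::ₘ S', RM.step_top hrew (Or.inr hm') hS', ?_⟩
        refine Cover.cons ?_ hc
        by_cases hmm : mm = m'
        · exact Or.inl (by rw [hmm])
        · exact Or.inr (Or.inr ⟨rfl, lt_of_le_of_ne hm hmm⟩)
      · have hm0 : m' = 0 := by omega
        have hmm0 : mm = 0 := by omega
        subst hm0; subst hmm0
        have hb : b = true := by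
          rcases hcond with h | h
          · exact h
          · exact absurd h (by simp)
        subst hb
        refine ⟨(u, 0) ::ₘ S', RM.step_top hrew (Or.inl rfl) hS', Cover.cons (Or.inl rfl) hc⟩
  | @step_deep t t' u SS hrew hSS ih =>
      obtain ⟨S', hS', hc⟩ := ih (Nat.zero_le _)
      by_cases hm' : 0 < m'
      · refine ⟨(u, m') ::ₘ S', RM.step_top hrew (Or.inr hm') hS', ?_⟩
        refine Cover.cons ?_ hc
        by_cases h1 : 1 = m'
        · exact Or.inl (by rw [h1])
        · exact Or.inr (Or.inr ⟨rfl, by omega⟩)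
      · have hm0 : m' = 0 := by omega
        subst hm0
        exact ⟨(u, 1) ::ₘ S', RM.step_deep hrew hS', Cover.cons (Or.inl rfl) hc⟩

theorem cover_rm (hR : GoodRS O R) (hLR : LeftReduced R) (g : Trm F V) {m m' : ℕ}
    (hm : m ≤ m') : Cover (lexGT O) (rm R g m) (rm R g m') := by
  obtain ⟨S', hS', hc⟩ := RM_cover_exists (O := O) (rm_spec hR g m) m' hm
  rw [rm_eq hR hLR hS']
  exact hc

/-- Prepending the normalization of an argument. -/
theorem RM_arg (hR : GoodRS O R) {a c : Trm F V} (hrtg : Relation.ReflTransGen (Step R) a c)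
    (hirr : Irred R c) (f : F) (l r : List (Trm F V)) (m : ℕ)
    {T : Multiset (Trm F V × ℕ)} (hT : RM R (Trm.app f (l ++ c :: r)) m T) :
    ∃ S, RM R a (max m 1) S ∧ RM R (Trm.app f (l ++ a :: r)) m (S + T) := by
  induction hrtg using Relation.ReflTransGen.head_induction_on with
  | refl => exact ⟨0, RM.irred (fun t' h => hirr t' h), by simpa using hT⟩
  | @head a b hab _ ih =>
      obtain ⟨S, hS, hws⟩ := ih
      obtain ⟨u, bf, hrew⟩ := hab
      refine ⟨(u, max m 1) ::ₘ S, RM.step_top hrew (Or.inr (by omega)) hS, ?_⟩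
      have hrew' : RewAt R (Trm.app f (l ++ a :: r)) (Trm.app f (l ++ b :: r)) u false :=
        RewAt.congr hrew
      rcases Nat.eq_zero_or_pos m with hm0 | hmpos
      · subst hm0
        have := RM.step_deep hrew' hws
        simpa [Multiset.cons_add] using this
      · have hmax : max m 1 = m := by omega
        rw [hmax]
        have := RM.step_top hrew' (Or.inr hmpos) hws
        simpa [Multiset.cons_add] using this

/-- Lemma 2: argument-wise decomposition of `rm`. -/
theorem rm_app_decomp (hR : GoodRS O R) (hLR : LeftReduced R) (f : F) (gs : List (Trm F V))
    (m : ℕ) :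
    rm R (Trm.app f gs) m
      = (gs.map (fun g => rm R g (max m 1))).sum + rm R (Trm.app f (gs.map (nf R))) m := by
  suffices h : ∀ (gs : List (Trm F V)) (l : List (Trm F V)),
      RM R (Trm.app f (l ++ gs)) m
        ((gs.map (fun g => rm R g (max m 1))).sum + rm R (Trm.app f (l ++ gs.map (nf R))) m) by
    have := h gs []
    simpa using rm_eq hR hLR (by simpa using this)
  intro gs
  induction gs with
  | nil => intro l; simpa using rm_spec hR (Trm.app f l) m
  | cons g gs' ih =>
      intro l
      have h1 := ih (l ++ [g])
      simp only [List.append_assoc, List.singleton_append] at h1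
      -- h1 : RM R (app f (l ++ g :: gs')) m (Σ gs' + rm (app f (l ++ g :: gs'.map nf)) m)
      have h2 : ReachNF R g (nf R g) := nf_reach hR g
      have h3 := rm_spec hR (Trm.app f (l ++ nf R g :: gs'.map (nf R))) m
      obtain ⟨S, hS, hws⟩ := RM_arg hR h2.1 h2.2 f l (gs'.map (nf R)) m h3
      have hSeq : S = rm R g (max m 1) := (rm_eq hR hLR hS).symm
      subst hSeq
      have heq : rm R (Trm.app f (l ++ g :: gs'.map (nf R))) m
          = rm R g (max m 1) + rm R (Trm.app f (l ++ nf R g :: gs'.map (nf R))) m :=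
        rm_eq hR hLR hws
      rw [heq] at h1
      have hms : (List.map (fun g => rm R g (max m 1)) (g :: gs')).sum
            + rm R (Trm.app f (l ++ (g :: gs').map (nf R))) m
          = (List.map (fun g => rm R g (max m 1)) gs').sum
            + (rm R g (max m 1) + rm R (Trm.app f (l ++ nf R g :: gs'.map (nf R))) m) := by
        simp only [List.map_cons, List.sum_cons]
        abel
      rw [hms]
      exact h1

end RMCover

/-- Multiset of proper subterm occurrences. -/
def psubtermsM : Trm F V → Multiset (Trm F V)
  | .var _ => 0
  | .app _ ts => (ts.attach.map fun t => t.1 ::ₘ psubtermsM t.1).sum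
decreasing_by
  have := List.sizeOf_lt_of_mem t.2
  simp only [Trm.app.sizeOf_spec]
  omega

theorem psubtermsM_var (x : V) : psubtermsM (Trm.var x : Trm F V) = 0 := by rw [psubtermsM]

theorem psubtermsM_app (f : F) (ts : List (Trm F V)) :
    psubtermsM (Trm.app f ts) = (ts.map fun t => t ::ₘ psubtermsM t).sum := by
  rw [psubtermsM]; congr 1; exact List.attach_map_val (f := fun t => t ::ₘ psubtermsM t)

theorem mem_list_msum {α : Type} {v : α} {l : List (Multiset α)} :
    v ∈ l.sum ↔ ∃ s ∈ l, v ∈ s := by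
  induction l with
  | nil => simp
  | cons h t ih => simp [ih]

theorem mem_psubtermsM_iff : ∀ {t v : Trm F V}, v ∈ psubtermsM t ↔ v ∈ t.psubterms := by
  intro t
  induction t using psubtermsM.induct with
  | case1 x => intro v; simp [psubtermsM_var, Trm.psubterms_var]
  | case2 f ts ih =>
      intro v
      rw [psubtermsM_app, Trm.mem_psubterms_app, mem_list_msum]
      constructor
      · rintro ⟨s, hs, hv⟩
        obtain ⟨a, ha, rfl⟩ := List.mem_map.1 hs
        rcases Multiset.mem_cons.1 hv with hva | hv
        · exact ⟨a, ha, by rw [hva]; exact Trm.self_mem_subterms a⟩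
        · exact ⟨a, ha, Trm.mem_subterms_iff.2 (Or.inr ((ih ⟨a, ha⟩).1 hv))⟩
      · rintro ⟨a, ha, hv⟩
        refine ⟨a ::ₘ psubtermsM a, List.mem_map.2 ⟨a, ha, rfl⟩, ?_⟩
        rcases Trm.mem_subterms_iff.1 hv with hva | hv
        · rw [hva]; exact Multiset.mem_cons_self _ _
        · exact Multiset.mem_cons_of_mem ((ih ⟨a, ha⟩).2 hv)

theorem msum_map_sum {α β : Type} (fn : α → Multiset β) (l : List (Multiset α)) :
    (l.sum.map fn).sum = (l.map (fun s => (s.map fn).sum)).sum := by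
  induction l with
  | nil => simp
  | cons h t ih => simp [Multiset.map_add, ih]

section Expand
variable {O : ReductionOrdering F V} {R : Set (Trm F V × Trm F V)}

theorem rm_subst_expand (hR : GoodRS O R) (hLR : LeftReduced R) (θ' : V → Trm F V) :
    ∀ (t : Trm F V) (m : ℕ),
    rm R (t.subst θ') m
      = nmElt R θ' (t, m) + ((psubtermsM t).map (fun v => nmElt R θ' (v, max m 1))).sum
  | .var x, m => by
      rw [Trm.subst_var]
      simp [nmElt, psubtermsM_var]
  | .app f ts, m => by
      rw [Trm.subst_app, rm_app_decomp hR hLR]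
      have h1 : ∀ a ∈ ts, rm R (a.subst θ') (max m 1)
          = ((a ::ₘ psubtermsM a).map (fun v => nmElt R θ' (v, max m 1))).sum := by
        intro a ha
        rw [Multiset.map_cons, Multiset.sum_cons]
        have hmx : max (max m 1) 1 = max m 1 := by omega
        have := rm_subst_expand hR hLR θ' a (max m 1)
        rw [hmx] at this
        exact this
      have h2 : nmElt R θ' (Trm.app f ts, m)
          = rm R (Trm.app f ((ts.map (Trm.subst θ')).map (nf R))) m := by
        simp only [nmElt, List.map_map, Function.comp_def]
      rw [h2, psubtermsM_app, msum_map_sum]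
      simp only [List.map_map]
      have h3 : (ts.map ((fun g => rm R g (max m 1)) ∘ Trm.subst θ')).sum
          = (ts.map ((fun s => (Multiset.map (fun v => nmElt R θ' (v, max m 1)) s).sum)
              ∘ fun t => t ::ₘ psubtermsM t)).sum := by
        congr 1
        refine List.map_congr_left (fun a ha => ?_)
        simp only [Function.comp_def]
        exact h1 a ha
      rw [h3]
      exact add_comm _ _
termination_by t => sizeOf t
decreasing_by
  have := List.sizeOf_lt_of_mem ha
  simp only [Trm.app.sizeOf_spec]
  omega

end Expand

set_option autoImplicit false
set_option maxHeartbeats 1000000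
open Trm

variable {F V : Type}

section GTerm
variable (R : Set (Trm F V × Trm F V)) (θ : V → Trm F V)

/-- The term whose `rm` is computed by `nmElt`. -/
noncomputable def gTerm : Trm F V → Trm F V
  | .var x => θ x
  | .app f ts => .app f (ts.map fun t => nf R (t.subst θ))

theorem nmElt_eq (p : Trm F V × ℕ) : nmElt R θ p = rm R (gTerm R θ p.1) p.2 := by
  obtain ⟨w, m⟩ := p
  cases w with
  | var x => rfl
  | app f ts => rfl

end GTerm

section SetLemmas
variable {C : Clause F V} {v : Trm F V}

theorem mem_ssN : v ∈ ssN C ↔ ∃ a b, Lit.neg a b ∈ C ∧ (v ∈ a.subterms ∨ v ∈ b.subterms) := by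
  rw [ssN, Finset.mem_sup]
  constructor
  · rintro ⟨L, hL, hv⟩
    cases L with
    | pos a b => simp [Lit.negSubs] at hv
    | neg a b =>
        rw [Multiset.mem_toFinset] at hL
        exact ⟨a, b, hL, by simpa [Lit.negSubs, Finset.mem_union] using hv⟩
  · rintro ⟨a, b, hL, hv⟩
    exact ⟨Lit.neg a b, Multiset.mem_toFinset.2 hL, by simpa [Lit.negSubs, Finset.mem_union] using hv⟩

theorem mem_ssPp : v ∈ ssPp C ↔ ∃ a b, Lit.pos a b ∈ C ∧ (v ∈ a.psubterms ∨ v ∈ b.psubterms) := by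
  rw [ssPp, Finset.mem_sup]
  constructor
  · rintro ⟨L, hL, hv⟩
    cases L with
    | neg a b => simp [Lit.posPSubs] at hv
    | pos a b =>
        rw [Multiset.mem_toFinset] at hL
        exact ⟨a, b, hL, by simpa [Lit.posPSubs, Finset.mem_union] using hv⟩
  · rintro ⟨a, b, hL, hv⟩
    exact ⟨Lit.pos a b, Multiset.mem_toFinset.2 hL, by simpa [Lit.posPSubs, Finset.mem_union] using hv⟩

theorem mem_tsN : v ∈ tsN C ↔ ∃ a b, Lit.neg a b ∈ C ∧ (v = a ∨ v = b) := by
  rw [tsN, Finset.mem_sup]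
  constructor
  · rintro ⟨L, hL, hv⟩
    cases L with
    | pos a b => simp [Lit.negTops] at hv
    | neg a b =>
        rw [Multiset.mem_toFinset] at hL
        exact ⟨a, b, hL, by simpa [Lit.negTops] using hv⟩
  · rintro ⟨a, b, hL, hv⟩
    exact ⟨Lit.neg a b, Multiset.mem_toFinset.2 hL, by simpa [Lit.negTops] using hv⟩

theorem mem_tsP : v ∈ tsP C ↔ ∃ a b, Lit.pos a b ∈ C ∧ (v = a ∨ v = b) := by
  rw [tsP, Finset.mem_sup]
  constructor
  · rintro ⟨L, hL, hv⟩
    cases L with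
    | neg a b => simp [Lit.posTops] at hv
    | pos a b =>
        rw [Multiset.mem_toFinset] at hL
        exact ⟨a, b, hL, by simpa [Lit.posTops] using hv⟩
  · rintro ⟨a, b, hL, hv⟩
    exact ⟨Lit.pos a b, Multiset.mem_toFinset.2 hL, by simpa [Lit.posTops] using hv⟩

end SetLemmas

section LssLemmas
variable (C : Clause F V)

/-- The label of a term in `lss`. -/
noncomputable def labelL (w : Trm F V) : ℕ :=
  if w ∈ ssN C then 2 else if w ∈ ssPp C then 1 else 0

variable {C}

theorem mem_lss_iff {p : Trm F V × ℕ} :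
    p ∈ lss C ↔ (p.1 ∈ ssN C ∪ ssPp C ∪ tsP C) ∧ p.2 = labelL C p.1 := by
  obtain ⟨w, m⟩ := p
  rw [lss, labelL]
  simp only [Finset.mem_union, Finset.mem_image, Finset.mem_sdiff, Prod.mk.injEq]
  constructor
  · rintro ((⟨t, ht, rfl, rfl⟩ | ⟨t, ⟨ht1, ht2⟩, rfl, rfl⟩) | ⟨t, ⟨ht1, ht2⟩, rfl, rfl⟩)
    · exact ⟨Or.inl (Or.inl ht), by simp [ht]⟩
    · exact ⟨Or.inl (Or.inr ht1), by simp [ht1, ht2]⟩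
    · push_neg at ht2
      exact ⟨Or.inr ht1, by simp [ht2.1, ht2.2]⟩
  · rintro ⟨hmem, hm⟩
    by_cases h2 : w ∈ ssN C
    · exact Or.inl (Or.inl ⟨w, h2, rfl, by rw [hm]; simp [h2]⟩)
    · by_cases h1 : w ∈ ssPp C
      · exact Or.inl (Or.inr ⟨w, ⟨h1, h2⟩, rfl, by rw [hm]; simp [h1, h2]⟩)
      · have h0 : w ∈ tsP C := by
          rcases hmem with (h | h) | h
          · exact absurd h h2
          · exact absurd h h1
          · exact h
        exact Or.inr ⟨w, ⟨h0, by push_neg; exact ⟨h1, h2⟩⟩, rfl,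
          by rw [hm]; simp [h1, h2]⟩

theorem labelL_ssN {w : Trm F V} (h : w ∈ ssN C) : labelL C w = 2 := by simp [labelL, h]

theorem labelL_ssPp {w : Trm F V} (h : w ∈ ssPp C) : 1 ≤ labelL C w := by
  rw [labelL]; split <;> simp [h]

end LssLemmas

section LtsLemmas
variable (C : Clause F V)

noncomputable def labelT (w : Trm F V) : ℕ := if w ∈ tsN C then 2 else 0

variable {C}

theorem mem_lts_iff {p : Trm F V × ℕ} :
    p ∈ lts C ↔ (p.1 ∈ tsN C ∪ tsP C) ∧ p.2 = labelT C p.1 := by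
  obtain ⟨w, m⟩ := p
  rw [lts, labelT]
  simp only [Finset.mem_union, Finset.mem_image, Finset.mem_sdiff, Prod.mk.injEq]
  constructor
  · rintro (⟨t, ht, rfl, rfl⟩ | ⟨t, ⟨ht1, ht2⟩, rfl, rfl⟩)
    · exact ⟨Or.inl ht, by simp [ht]⟩
    · exact ⟨Or.inr ht1, by simp [ht2]⟩
  · rintro ⟨hmem, hm⟩
    by_cases h2 : w ∈ tsN C
    · exact Or.inl ⟨w, h2, rfl, by rw [hm]; simp [h2]⟩
    · have h0 : w ∈ tsP C := by
        rcases hmem with h | h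
        · exact absurd h h2
        · exact h
      exact Or.inr ⟨w, ⟨h0, h2⟩, rfl, by rw [hm]; simp [h2]⟩

end LtsLemmas

set_option autoImplicit false
set_option maxHeartbeats 1000000
open Trm

variable {F V : Type}

theorem subst_subterm_decomp (σ : V → Trm F V) :
    ∀ {u v : Trm F V}, v ∈ (u.subst σ).subterms →
    (∃ f ts, Trm.app f ts ∈ u.subterms ∧ (Trm.app f ts).subst σ = v) ∨
    (∃ x, Trm.var x ∈ u.subterms ∧ v ∈ (σ x).subterms) := by
  intro u
  induction u using Trm.subterms.induct with
  | case1 x =>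
      intro v hv
      rw [Trm.subst_var] at hv
      exact Or.inr ⟨x, Trm.self_mem_subterms _, hv⟩
  | case2 f ts ih =>
      intro v hv
      rw [Trm.subst_app] at hv
      rcases Trm.mem_subterms_app.1 hv with rfl | ⟨w, hw, hv⟩
      · exact Or.inl ⟨f, ts, Trm.self_mem_subterms _, Trm.subst_app σ f ts⟩
      · obtain ⟨a, ha, rfl⟩ := List.mem_map.1 hw
        rcases ih ⟨a, ha⟩ hv with ⟨g, us, hmem, he⟩ | ⟨x, hmem, he⟩
        · exact Or.inl ⟨g, us, Trm.mem_subterms_app.2 (Or.inr ⟨a, ha, hmem⟩), he⟩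
        · exact Or.inr ⟨x, Trm.mem_subterms_app.2 (Or.inr ⟨a, ha, hmem⟩), he⟩

theorem subst_psubterm_decomp (σ : V → Trm F V) {u v : Trm F V}
    (hv : v ∈ (u.subst σ).psubterms) :
    (∃ f ts, Trm.app f ts ∈ u.psubterms ∧ (Trm.app f ts).subst σ = v) ∨
    (∃ x, Trm.var x ∈ u.psubterms ∧ v ∈ (σ x).subterms) ∨
    (∃ x, u = Trm.var x ∧ v ∈ (σ x).psubterms) := by
  cases u with
  | var x =>
      rw [Trm.subst_var] at hv
      exact Or.inr (Or.inr ⟨x, rfl, hv⟩)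
  | app f ts =>
      rw [Trm.subst_app] at hv
      rcases Trm.mem_psubterms_app.1 hv with ⟨w, hw, hv⟩
      obtain ⟨a, ha, rfl⟩ := List.mem_map.1 hw
      rcases subst_subterm_decomp σ hv with ⟨g, us, hmem, he⟩ | ⟨x, hmem, he⟩
      · exact Or.inl ⟨g, us, Trm.mem_psubterms_app.2 ⟨a, ha, hmem⟩, he⟩
      · exact Or.inr (Or.inl ⟨x, Trm.mem_psubterms_app.2 ⟨a, ha, hmem⟩, he⟩)

section Source

variable {C' : Clause F V} {s s' : Trm F V} {σ : V → Trm F V}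

theorem clause_subst_mem {L : Lit F V} {C : Clause F V} {τ : V → Trm F V} :
    L ∈ Clause.subst τ C ↔ ∃ L0 ∈ C, Lit.subst τ L0 = L := by
  rw [Clause.subst]
  exact Multiset.mem_map

theorem mem_add_left {L : Lit F V} {C D : Clause F V} (h : L ∈ C) : L ∈ C + D :=
  Multiset.mem_add.2 (Or.inl h)

/-- Sources for `lss` elements of the conclusion. -/
theorem exists_source_lss :
    ∀ p ∈ lss (Clause.subst σ C'), ∃ q ∈ lss (C' + ({Lit.neg s s'} : Clause F V)),
      ((∃ f ts, q.1 = Trm.app f ts) ∧ q.1.subst σ = p.1 ∧ p.2 ≤ q.2) ∨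
      (∃ x, q.1 = Trm.var x ∧
        ((p.1 = σ x ∧ p.2 ≤ q.2) ∨ (p.1 ∈ psubtermsM (σ x) ∧ p.2 ≤ max q.2 1))) := by
  intro p hp
  set D := Clause.subst σ C' with hD
  set P := C' + ({Lit.neg s s'} : Clause F V) with hP
  obtain ⟨hmem, hlab⟩ := mem_lss_iff.1 hp
  -- helper to build q
  have build : ∀ w : Trm F V, w ∈ ssN P ∪ ssPp P ∪ tsP P →
      (w, labelL P w) ∈ lss P := fun w hw => mem_lss_iff.2 ⟨hw, rfl⟩
  by_cases h2 : p.1 ∈ ssN D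
  · -- label 2
    have hl2 : p.2 = 2 := by rw [hlab, labelL_ssN h2]
    obtain ⟨a, b, hLD, hv⟩ := mem_ssN.1 h2
    obtain ⟨L0, hL0, hL0e⟩ := clause_subst_mem.1 hLD
    cases L0 with
    | pos a0 b0 => exact absurd hL0e (by simp [Lit.subst])
    | neg a0 b0 =>
        rw [Lit.subst] at hL0e
        injection hL0e with he1 he2
        have hvs : p.1 ∈ (a0.subst σ).subterms ∨ p.1 ∈ (b0.subst σ).subterms := by
          rcases hv with h | h
          · exact Or.inl (he1 ▸ h)
          · exact Or.inr (he2 ▸ h)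
        have hssN0 : ∀ t : Trm F V, t ∈ a0.subterms ∨ t ∈ b0.subterms → t ∈ ssN P := by
          intro t ht
          exact mem_ssN.2 ⟨a0, b0, mem_add_left hL0, ht⟩
        have key : ∀ c0 : Trm F V, (c0 = a0 ∨ c0 = b0) → p.1 ∈ (c0.subst σ).subterms →
            ∃ q ∈ lss P, ((∃ f ts, q.1 = Trm.app f ts) ∧ q.1.subst σ = p.1 ∧ p.2 ≤ q.2) ∨
            (∃ x, q.1 = Trm.var x ∧
              ((p.1 = σ x ∧ p.2 ≤ q.2) ∨ (p.1 ∈ psubtermsM (σ x) ∧ p.2 ≤ max q.2 1))) := by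
          intro c0 hc0 hsub
          rcases subst_subterm_decomp σ hsub with ⟨g, us, hmemc, he⟩ | ⟨x, hmemc, he⟩
          · have hN : Trm.app g us ∈ ssN P := by
              apply hssN0
              rcases hc0 with rfl | rfl
              · exact Or.inl hmemc
              · exact Or.inr hmemc
            refine ⟨(Trm.app g us, labelL P (Trm.app g us)),
              build _ (Finset.mem_union.2 (Or.inl (Finset.mem_union.2 (Or.inl hN)))), ?_⟩
            exact Or.inl ⟨⟨g, us, rfl⟩, he, by rw [labelL_ssN hN, hl2]⟩
          · have hN : (Trm.var x : Trm F V) ∈ ssN P := by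
              apply hssN0
              rcases hc0 with rfl | rfl
              · exact Or.inl hmemc
              · exact Or.inr hmemc
            refine ⟨(Trm.var x, labelL P (Trm.var x)),
              build _ (Finset.mem_union.2 (Or.inl (Finset.mem_union.2 (Or.inl hN)))), ?_⟩
            refine Or.inr ⟨x, rfl, ?_⟩
            rcases Trm.mem_subterms_iff.1 he with heq | hps
            · exact Or.inl ⟨heq, by rw [labelL_ssN hN, hl2]⟩
            · exact Or.inr ⟨mem_psubtermsM_iff.2 hps, by rw [labelL_ssN hN, hl2]; omega⟩
        rcases hvs with h | h
        · exact key a0 (Or.inl rfl) h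
        · exact key b0 (Or.inr rfl) h
  · by_cases h1 : p.1 ∈ ssPp D
    · -- label 1
      have hl1 : p.2 = 1 := by rw [hlab, labelL]; simp [h2, h1]
      obtain ⟨a, b, hLD, hv⟩ := mem_ssPp.1 h1
      obtain ⟨L0, hL0, hL0e⟩ := clause_subst_mem.1 hLD
      cases L0 with
      | neg a0 b0 => exact absurd hL0e (by simp [Lit.subst])
      | pos a0 b0 =>
          rw [Lit.subst] at hL0e
          injection hL0e with he1 he2
          have hvs : p.1 ∈ (a0.subst σ).psubterms ∨ p.1 ∈ (b0.subst σ).psubterms := by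
            rcases hv with h | h
            · exact Or.inl (he1 ▸ h)
            · exact Or.inr (he2 ▸ h)
          have hssP0 : ∀ t : Trm F V, t ∈ a0.psubterms ∨ t ∈ b0.psubterms → t ∈ ssPp P := by
            intro t ht
            exact mem_ssPp.2 ⟨a0, b0, mem_add_left hL0, ht⟩
          have htsP0 : ∀ t : Trm F V, (t = a0 ∨ t = b0) → t ∈ tsP P := by
            intro t ht
            exact mem_tsP.2 ⟨a0, b0, mem_add_left hL0, ht⟩
          have key : ∀ c0 : Trm F V, (c0 = a0 ∨ c0 = b0) → p.1 ∈ (c0.subst σ).psubterms →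
              ∃ q ∈ lss P, ((∃ f ts, q.1 = Trm.app f ts) ∧ q.1.subst σ = p.1 ∧ p.2 ≤ q.2) ∨
              (∃ x, q.1 = Trm.var x ∧
                ((p.1 = σ x ∧ p.2 ≤ q.2) ∨ (p.1 ∈ psubtermsM (σ x) ∧ p.2 ≤ max q.2 1))) := by
            intro c0 hc0 hsub
            rcases subst_psubterm_decomp σ hsub with ⟨g, us, hmemc, he⟩ | ⟨x, hmemc, he⟩ | ⟨x, hc0x, he⟩
            · have hPp : Trm.app g us ∈ ssPp P := by
                apply hssP0
                rcases hc0 with rfl | rfl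
                · exact Or.inl hmemc
                · exact Or.inr hmemc
              refine ⟨(Trm.app g us, labelL P (Trm.app g us)),
                build _ (Finset.mem_union.2 (Or.inl (Finset.mem_union.2 (Or.inr hPp)))), ?_⟩
              exact Or.inl ⟨⟨g, us, rfl⟩, he, by rw [hl1]; exact labelL_ssPp hPp⟩
            · have hPp : (Trm.var x : Trm F V) ∈ ssPp P := by
                apply hssP0
                rcases hc0 with rfl | rfl
                · exact Or.inl hmemc
                · exact Or.inr hmemc
              refine ⟨(Trm.var x, labelL P (Trm.var x)),
                build _ (Finset.mem_union.2 (Or.inl (Finset.mem_union.2 (Or.inr hPp)))), ?_⟩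
              refine Or.inr ⟨x, rfl, ?_⟩
              rcases Trm.mem_subterms_iff.1 he with heq | hps
              · exact Or.inl ⟨heq, by rw [hl1]; exact labelL_ssPp hPp⟩
              · exact Or.inr ⟨mem_psubtermsM_iff.2 hps, by rw [hl1]; omega⟩
            · have hT : (Trm.var x : Trm F V) ∈ tsP P := by
                apply htsP0
                rcases hc0 with rfl | rfl
                · exact Or.inl hc0x.symm
                · exact Or.inr hc0x.symm
              refine ⟨(Trm.var x, labelL P (Trm.var x)),
                build _ (Finset.mem_union.2 (Or.inr hT)), ?_⟩
              refine Or.inr ⟨x, rfl, Or.inr ⟨mem_psubtermsM_iff.2 he, by rw [hl1]; omega⟩⟩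
          rcases hvs with h | h
          · exact key a0 (Or.inl rfl) h
          · exact key b0 (Or.inr rfl) h
    · -- label 0
      have hl0 : p.2 = 0 := by rw [hlab, labelL]; simp [h2, h1]
      have h0 : p.1 ∈ tsP D := by
        rcases Finset.mem_union.1 hmem with h | h
        · rcases Finset.mem_union.1 h with h | h
          · exact absurd h h2
          · exact absurd h h1
        · exact h
      obtain ⟨a, b, hLD, hv⟩ := mem_tsP.1 h0
      obtain ⟨L0, hL0, hL0e⟩ := clause_subst_mem.1 hLD
      cases L0 with
      | neg a0 b0 => exact absurd hL0e (by simp [Lit.subst])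
      | pos a0 b0 =>
          rw [Lit.subst] at hL0e
          injection hL0e with he1 he2
          have htsP0 : ∀ t : Trm F V, (t = a0 ∨ t = b0) → t ∈ tsP (C' + ({Lit.neg s s'} : Clause F V)) := by
            intro t ht
            exact mem_tsP.2 ⟨a0, b0, mem_add_left hL0, ht⟩
          have key : ∀ c0 : Trm F V, (c0 = a0 ∨ c0 = b0) → p.1 = c0.subst σ →
              ∃ q ∈ lss P, ((∃ f ts, q.1 = Trm.app f ts) ∧ q.1.subst σ = p.1 ∧ p.2 ≤ q.2) ∨
              (∃ x, q.1 = Trm.var x ∧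
                ((p.1 = σ x ∧ p.2 ≤ q.2) ∨ (p.1 ∈ psubtermsM (σ x) ∧ p.2 ≤ max q.2 1))) := by
            intro c0 hc0 hpe
            have hT : c0 ∈ tsP P := htsP0 c0 hc0
            refine ⟨(c0, labelL P c0), build _ (Finset.mem_union.2 (Or.inr hT)), ?_⟩
            cases c0 with
            | var x =>
                refine Or.inr ⟨x, rfl, Or.inl ⟨by rw [hpe, Trm.subst_var], by omega⟩⟩
            | app g us =>
                exact Or.inl ⟨⟨g, us, rfl⟩, hpe.symm, by omega⟩
          rcases hv with h | h
          · exact key a0 (Or.inl rfl) (by rw [h, ← he1])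
          · exact key b0 (Or.inr rfl) (by rw [h, ← he2])

/-- Sources for `lts` elements of the conclusion. -/
theorem exists_source_lts :
    ∀ p ∈ lts (Clause.subst σ C'), ∃ q ∈ lts (C' + ({Lit.neg s s'} : Clause F V)),
      q.1.subst σ = p.1 ∧ p.2 ≤ q.2 := by
  intro p hp
  set D := Clause.subst σ C' with hD
  set P := C' + ({Lit.neg s s'} : Clause F V) with hP
  obtain ⟨hmem, hlab⟩ := mem_lts_iff.1 hp
  have build : ∀ w : Trm F V, w ∈ tsN P ∪ tsP P → (w, labelT P w) ∈ lts P :=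
    fun w hw => mem_lts_iff.2 ⟨hw, rfl⟩
  by_cases h2 : p.1 ∈ tsN D
  · have hl2 : p.2 = 2 := by rw [hlab, labelT]; simp [h2]
    obtain ⟨a, b, hLD, hv⟩ := mem_tsN.1 h2
    obtain ⟨L0, hL0, hL0e⟩ := clause_subst_mem.1 hLD
    cases L0 with
    | pos a0 b0 => exact absurd hL0e (by simp [Lit.subst])
    | neg a0 b0 =>
        rw [Lit.subst] at hL0e
        injection hL0e with he1 he2
        have key : ∀ c0 : Trm F V, (c0 = a0 ∨ c0 = b0) → p.1 = c0.subst σ →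
            ∃ q ∈ lts P, q.1.subst σ = p.1 ∧ p.2 ≤ q.2 := by
          intro c0 hc0 hpe
          have hN : c0 ∈ tsN P := by
            refine mem_tsN.2 ⟨a0, b0, mem_add_left hL0, hc0⟩
          refine ⟨(c0, labelT P c0), build _ (Finset.mem_union.2 (Or.inl hN)), hpe.symm, ?_⟩
          rw [labelT]; simp [hN, hl2]
        rcases hv with h | h
        · exact key a0 (Or.inl rfl) (by rw [h, ← he1])
        · exact key b0 (Or.inr rfl) (by rw [h, ← he2])
  · have hl0 : p.2 = 0 := by rw [hlab, labelT]; simp [h2]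
    have h0 : p.1 ∈ tsP D := by
      rcases Finset.mem_union.1 hmem with h | h
      · exact absurd h h2
      · exact h
    obtain ⟨a, b, hLD, hv⟩ := mem_tsP.1 h0
    obtain ⟨L0, hL0, hL0e⟩ := clause_subst_mem.1 hLD
    cases L0 with
    | neg a0 b0 => exact absurd hL0e (by simp [Lit.subst])
    | pos a0 b0 =>
        rw [Lit.subst] at hL0e
        injection hL0e with he1 he2
        have key : ∀ c0 : Trm F V, (c0 = a0 ∨ c0 = b0) → p.1 = c0.subst σ →
            ∃ q ∈ lts P, q.1.subst σ = p.1 ∧ p.2 ≤ q.2 := by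
          intro c0 hc0 hpe
          have hT : c0 ∈ tsP P := mem_tsP.2 ⟨a0, b0, mem_add_left hL0, hc0⟩
          refine ⟨(c0, labelT P c0), build _ (Finset.mem_union.2 (Or.inr hT)), hpe.symm, by omega⟩
        rcases hv with h | h
        · exact key a0 (Or.inl rfl) (by rw [h, ← he1])
        · exact key b0 (Or.inr rfl) (by rw [h, ← he2])

end Source

set_option autoImplicit false
set_option maxHeartbeats 1000000
open Trm

variable {F V : Type}

section SumCover
variable {α β : Type} {r : α → α → Prop}

theorem cover_msum {M : Multiset β} {f g : β → Multiset α}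
    (h : ∀ p ∈ M, Cover r (f p) (g p)) :
    Cover r ((M.map f).sum) ((M.map g).sum) := by
  induction M using Multiset.induction_on with
  | empty => simpa using Cover.refl 0
  | cons a M ih =>
      simp only [Multiset.map_cons, Multiset.sum_cons]
      exact Cover.add (h a (Multiset.mem_cons_self a M))
        (ih fun p hp => h p (Multiset.mem_cons_of_mem hp))

theorem cover_finset_sum [DecidableEq β] {s : Finset β} {f g : β → Multiset α}
    (h : ∀ i ∈ s, Cover r (f i) (g i)) :
    Cover r (s.sum f) (s.sum g) := by
  classical
  induction s using Finset.induction_on with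
  | empty => simpa using Cover.refl 0
  | insert _ _ hnot ih =>
      rename_i a s
      rw [Finset.sum_insert hnot, Finset.sum_insert hnot]
      exact Cover.add (h a (Finset.mem_insert_self a s))
        (ih fun i hi => h i (Finset.mem_insert_of_mem hi))

theorem cover_fiberwise [DecidableEq β] {A B : Finset β} {nA nB : β → Multiset α}
    {src : β → β} (hsrc : ∀ p ∈ A, src p ∈ B)
    (hfib : ∀ q ∈ B, Cover r ((A.filter (fun p => src p = q)).sum nA) (nB q)) :
    Cover r (A.sum nA) (B.sum nB) := by
  classical
  have h1 : ∑ q ∈ B, (A.filter (fun p => src p = q)).sum nA = A.sum nA :=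
    Finset.sum_fiberwise_of_maps_to hsrc nA
  rw [← h1]
  exact cover_finset_sum hfib

end SumCover

section Unique

theorem lss_fst_inj {C : Clause F V} {p p' : Trm F V × ℕ} (hp : p ∈ lss C) (hp' : p' ∈ lss C)
    (h : p.1 = p'.1) : p = p' := by
  obtain ⟨-, h1⟩ := mem_lss_iff.1 hp
  obtain ⟨-, h2⟩ := mem_lss_iff.1 hp'
  obtain ⟨w, m⟩ := p
  obtain ⟨w', m'⟩ := p'
  simp only at h h1 h2
  subst h
  rw [Prod.mk.injEq]
  exact ⟨rfl, by rw [h1, h2]⟩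

theorem lts_fst_inj {C : Clause F V} {p p' : Trm F V × ℕ} (hp : p ∈ lts C) (hp' : p' ∈ lts C)
    (h : p.1 = p'.1) : p = p' := by
  obtain ⟨-, h1⟩ := mem_lts_iff.1 hp
  obtain ⟨-, h2⟩ := mem_lts_iff.1 hp'
  obtain ⟨w, m⟩ := p
  obtain ⟨w', m'⟩ := p'
  simp only at h h1 h2
  subst h
  rw [Prod.mk.injEq]
  exact ⟨rfl, by rw [h1, h2]⟩

end Unique

set_option autoImplicit false
set_option maxHeartbeats 1000000
open Trm

variable {F V : Type}

theorem sum_eq_of_all_eq {β α : Type} [DecidableEq β] {s : Finset β} {p₀ : β}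
    (h : ∀ p ∈ s, p = p₀) (f : β → Multiset α) :
    s.sum f = 0 ∨ (p₀ ∈ s ∧ s.sum f = f p₀) := by
  rcases s.eq_empty_or_nonempty with rfl | ⟨p, hp⟩
  · exact Or.inl rfl
  · have hp₀ : p₀ ∈ s := (h p hp) ▸ hp
    have hs : s = {p₀} := Finset.eq_singleton_iff_unique_mem.2 ⟨hp₀, h⟩
    exact Or.inr ⟨hp₀, by rw [hs, Finset.sum_singleton]⟩

section Main
variable {O : ReductionOrdering F V} {R : Set (Trm F V × Trm F V)}
variable {C' : Clause F V} {s s' : Trm F V} {σ θ : V → Trm F V}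

theorem gTerm_subst_app (R : Set (Trm F V × Trm F V))
    (hcomp : ∀ t : Trm F V, (t.subst σ).subst θ = t.subst θ) (g : F) (us : List (Trm F V)) :
    gTerm R θ ((Trm.app g us).subst σ) = gTerm R θ (Trm.app g us) := by
  rw [Trm.subst_app]
  show Trm.app g (((us.map (Trm.subst σ))).map fun t => nf R (t.subst θ))
      = Trm.app g (us.map fun t => nf R (t.subst θ))
  rw [List.map_map]
  congr 1
  refine List.map_congr_left (fun a _ => ?_)
  simp only [Function.comp_def, hcomp a]

theorem theta_eq (hcomp : ∀ t : Trm F V, (t.subst σ).subst θ = t.subst θ) (x : V) :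
    (σ x).subst θ = θ x := by
  have h1 := hcomp (Trm.var x)
  rw [Trm.subst_var σ x, Trm.subst_var θ x] at h1
  exact h1

theorem cover_nm_lss (hR : GoodRS O R) (hLR : LeftReduced R)
    (hcomp : ∀ t : Trm F V, (t.subst σ).subst θ = t.subst θ) :
    Cover (lexGT O) ((lss (Clause.subst σ C')).sum (nmElt R θ))
      ((lss (C' + ({Lit.neg s s'} : Clause F V))).sum (nmElt R θ)) := by
  classical
  set D := Clause.subst σ C' with hD
  set P := C' + ({Lit.neg s s'} : Clause F V) with hP
  have hsel : ∀ p : Trm F V × ℕ, ∃ q : Trm F V × ℕ, p ∈ lss D → q ∈ lss P ∧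
      (((∃ f ts, q.1 = Trm.app f ts) ∧ q.1.subst σ = p.1 ∧ p.2 ≤ q.2) ∨
       (∃ x, q.1 = Trm.var x ∧
         ((p.1 = σ x ∧ p.2 ≤ q.2) ∨ (p.1 ∈ psubtermsM (σ x) ∧ p.2 ≤ max q.2 1)))) := by
    intro p
    by_cases hp : p ∈ lss D
    · obtain ⟨q, hq, hspec⟩ := exists_source_lss (s := s) (s' := s') p hp
      exact ⟨q, fun _ => ⟨hq, hspec⟩⟩
    · exact ⟨p, fun h => absurd h hp⟩
  choose src hsrc using hsel
  refine cover_fiberwise (src := src) (fun p hp => (hsrc p hp).1) ?_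
  intro q hq
  set Fq := (lss D).filter (fun p => src p = q) with hFq
  have hmemFq : ∀ p ∈ Fq, p ∈ lss D ∧ src p = q := by
    intro p hp
    have := Finset.mem_filter.1 hp
    exact ⟨this.1, this.2⟩
  obtain ⟨w, lq⟩ := q
  cases w with
  | app g us =>
      -- every fiber element equals (q.1σ, labelL D _)
      have hkey : ∀ p ∈ Fq, p.1 = (Trm.app g us).subst σ := by
        intro p hp
        obtain ⟨hpD, hsp⟩ := hmemFq p hp
        rcases (hsrc p hpD).2 with ⟨-, he, -⟩ | ⟨x, hx, -⟩
        · rw [hsp] at he; exact he.symm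
        · rw [hsp] at hx; exact absurd hx (by simp)
      by_cases hne : Fq.Nonempty
      · obtain ⟨p₀, hp₀⟩ := hne
        have hall : ∀ p ∈ Fq, p = p₀ := by
          intro p hp
          exact lss_fst_inj (hmemFq p hp).1 (hmemFq p₀ hp₀).1
            (by rw [hkey p hp, hkey p₀ hp₀])
        rcases sum_eq_of_all_eq hall (nmElt R θ) with h0 | ⟨-, hsum⟩
        · rw [h0]; exact Cover.zero _
        · rw [hsum, nmElt_eq, nmElt_eq]
          obtain ⟨hpD, hsp⟩ := hmemFq p₀ hp₀
          have hle : p₀.2 ≤ lq := by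
            rcases (hsrc p₀ hpD).2 with ⟨-, -, hle⟩ | ⟨x, hx, -⟩
            · rw [hsp] at hle; exact hle
            · rw [hsp] at hx; exact absurd hx (by simp)
          rw [hkey p₀ hp₀, gTerm_subst_app R hcomp]
          exact cover_rm hR hLR _ hle
      · rw [Finset.not_nonempty_iff_eq_empty.1 hne, Finset.sum_empty]
        exact Cover.zero _
  | var x =>
      have hspec : ∀ p ∈ Fq,
          (p.1 = σ x ∧ p.2 ≤ lq) ∨ (p.1 ∈ psubtermsM (σ x) ∧ p.2 ≤ max lq 1) := by
        intro p hp
        obtain ⟨hpD, hsp⟩ := hmemFq p hp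
        rcases (hsrc p hpD).2 with ⟨⟨f, ts, hf⟩, -, -⟩ | ⟨x', hx', hd⟩
        · rw [hsp] at hf; exact absurd hf (by simp)
        · rw [hsp] at hx' hd
          have : x' = x := by injection hx' with h; exact h.symm
          subst this
          exact hd
      -- target
      have htgt : nmElt R θ (Trm.var x, lq)
          = nmElt R θ (σ x, lq)
            + ((psubtermsM (σ x)).map (fun v => nmElt R θ (v, max lq 1))).sum := by
        have h1 : nmElt R θ (Trm.var x, lq) = rm R ((σ x).subst θ) lq := by
          rw [nmElt_eq]
          show rm R (θ x) lq = _
          rw [theta_eq hcomp x]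
        rw [h1, rm_subst_expand hR hLR]
      show Cover (lexGT O) (Fq.sum (nmElt R θ)) (nmElt R θ (Trm.var x, lq))
      rw [htgt]
      rw [← Finset.sum_filter_add_sum_filter_not Fq (fun p => p.1 = σ x) (nmElt R θ)]
      set F1 := Fq.filter (fun p => p.1 = σ x) with hF1
      set F2 := Fq.filter (fun p => ¬ p.1 = σ x) with hF2
      refine Cover.add ?_ ?_
      · -- root part
        by_cases hne : F1.Nonempty
        · obtain ⟨p₀, hp₀⟩ := hne
          have hmem1 : ∀ p ∈ F1, p ∈ Fq ∧ p.1 = σ x := by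
            intro p hp
            have := Finset.mem_filter.1 hp
            exact ⟨this.1, this.2⟩
          have hall : ∀ p ∈ F1, p = p₀ := by
            intro p hp
            exact lss_fst_inj (hmemFq p (hmem1 p hp).1).1 (hmemFq p₀ (hmem1 p₀ hp₀).1).1
              (by rw [(hmem1 p hp).2, (hmem1 p₀ hp₀).2])
          rcases sum_eq_of_all_eq hall (nmElt R θ) with h0 | ⟨-, hsum⟩
          · rw [h0]; exact Cover.zero _
          · rw [hsum, nmElt_eq, nmElt_eq]
            have hle : p₀.2 ≤ lq := by
              rcases hspec p₀ (hmem1 p₀ hp₀).1 with ⟨-, hle⟩ | ⟨hmem, -⟩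
              · exact hle
              · exfalso
                have h1 : sizeOf (σ x) < sizeOf (σ x) := by
                  have := Trm.sizeOf_lt_of_mem_psubterms (mem_psubtermsM_iff.1 hmem)
                  rwa [(hmem1 p₀ hp₀).2] at this
                omega
            rw [(hmem1 p₀ hp₀).2]
            exact cover_rm hR hLR _ hle
        · rw [Finset.not_nonempty_iff_eq_empty.1 hne, Finset.sum_empty]
          exact Cover.zero _
      · -- proper part
        have hmem2 : ∀ p ∈ F2, p ∈ Fq ∧ p.1 ≠ σ x := by
          intro p hp
          have := Finset.mem_filter.1 hp
          exact ⟨this.1, this.2⟩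
        have hspec2 : ∀ p ∈ F2, p.1 ∈ psubtermsM (σ x) ∧ p.2 ≤ max lq 1 := by
          intro p hp
          rcases hspec p (hmem2 p hp).1 with ⟨he, -⟩ | h
          · exact absurd he (hmem2 p hp).2
          · exact h
        set K := F2.val.map Prod.fst with hK
        have hKnodup : K.Nodup := by
          refine Multiset.Nodup.map_on ?_ F2.nodup
          intro p hp p' hp' he
          exact lss_fst_inj (hmemFq p (hmem2 p hp).1).1 (hmemFq p' (hmem2 p' hp').1).1 he
        have hKle : K ≤ psubtermsM (σ x) := by
          rw [Multiset.le_iff_count]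
          intro v
          by_cases hv : v ∈ K
          · have h1 : K.count v = 1 := Multiset.count_eq_one_of_mem hKnodup hv
            obtain ⟨p, hp, rfl⟩ := Multiset.mem_map.1 hv
            have h2 : p.1 ∈ psubtermsM (σ x) := (hspec2 p hp).1
            have h3 : 1 ≤ (psubtermsM (σ x)).count p.1 :=
              Multiset.one_le_count_iff_mem.2 h2
            omega
          · rw [Multiset.count_eq_zero_of_notMem hv]
            omega
        obtain ⟨Rest, hRest⟩ := Multiset.le_iff_exists_add.1 hKle
        rw [hRest, Multiset.map_add, Multiset.sum_add]
        refine Cover.add_right _ ?_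
        have hsum2 : F2.sum (nmElt R θ) = (F2.val.map (nmElt R θ)).sum := rfl
        rw [hsum2, hK, Multiset.map_map]
        refine cover_msum (fun p hp => ?_)
        simp only [Function.comp_def]
        rw [nmElt_eq, nmElt_eq]
        exact cover_rm hR hLR _ (hspec2 p hp).2

theorem cover_nm_lts (hcomp : ∀ t : Trm F V, (t.subst σ).subst θ = t.subst θ) :
    Cover (lexGT O) ((lts (Clause.subst σ C')).sum
        (fun p => ({(nf R (p.1.subst θ), p.2)} : Multiset (Trm F V × ℕ))))
      ((lts (C' + ({Lit.neg s s'} : Clause F V))).sum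
        (fun p => ({(nf R (p.1.subst θ), p.2)} : Multiset (Trm F V × ℕ)))) := by
  classical
  set D := Clause.subst σ C' with hD
  set P := C' + ({Lit.neg s s'} : Clause F V) with hP
  have hsel : ∀ p : Trm F V × ℕ, ∃ q : Trm F V × ℕ, p ∈ lts D →
      q ∈ lts P ∧ q.1.subst σ = p.1 ∧ p.2 ≤ q.2 := by
    intro p
    by_cases hp : p ∈ lts D
    · obtain ⟨q, hq, hspec⟩ := exists_source_lts (s := s) (s' := s') p hp
      exact ⟨q, fun _ => ⟨hq, hspec⟩⟩
    · exact ⟨p, fun h => absurd h hp⟩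
  choose src hsrc using hsel
  refine cover_fiberwise (src := src) (fun p hp => (hsrc p hp).1) ?_
  intro q hq
  set Fq := (lts D).filter (fun p => src p = q) with hFq
  have hmemFq : ∀ p ∈ Fq, p ∈ lts D ∧ src p = q := by
    intro p hp
    have := Finset.mem_filter.1 hp
    exact ⟨this.1, this.2⟩
  have hkey : ∀ p ∈ Fq, p.1 = q.1.subst σ := by
    intro p hp
    obtain ⟨hpD, hsp⟩ := hmemFq p hp
    have := (hsrc p hpD).2.1
    rw [hsp] at this
    exact this.symm
  by_cases hne : Fq.Nonempty
  · obtain ⟨p₀, hp₀⟩ := hne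
    have hall : ∀ p ∈ Fq, p = p₀ := by
      intro p hp
      exact lts_fst_inj (hmemFq p hp).1 (hmemFq p₀ hp₀).1
        (by rw [hkey p hp, hkey p₀ hp₀])
    rcases sum_eq_of_all_eq hall _ with h0 | ⟨-, hsum⟩
    · rw [h0]; exact Cover.zero _
    · rw [hsum]
      obtain ⟨hpD, hsp⟩ := hmemFq p₀ hp₀
      have hle : p₀.2 ≤ q.2 := by
        have := (hsrc p₀ hpD).2.2
        rwa [hsp] at this
      have hfst : nf R (p₀.1.subst θ) = nf R (q.1.subst θ) := by
        rw [hkey p₀ hp₀, hcomp q.1]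
      refine Cover.cons ?_ (Cover.refl 0)
      by_cases heq : p₀.2 = q.2
      · exact Or.inl (by rw [hfst, heq])
      · exact Or.inr (Or.inr ⟨hfst.symm, by omega⟩)
  · rw [Finset.not_nonempty_iff_eq_empty.1 hne, Finset.sum_empty]
    exact Cover.zero _

end Main

set_option autoImplicit false
set_option maxHeartbeats 1000000
open Trm

variable {F V : Type}

theorem Lit.subst_subst {σ θ : V → Trm F V}
    (hcomp : ∀ t : Trm F V, (t.subst σ).subst θ = t.subst θ) (L : Lit F V) :
    Lit.subst θ (Lit.subst σ L) = Lit.subst θ L := by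
  cases L with
  | pos a b => simp [Lit.subst, hcomp]
  | neg a b => simp [Lit.subst, hcomp]

theorem Clause.subst_subst {σ θ : V → Trm F V}
    (hcomp : ∀ t : Trm F V, (t.subst σ).subst θ = t.subst θ) (C : Clause F V) :
    Clause.subst θ (Clause.subst σ C) = Clause.subst θ C := by
  rw [Clause.subst, Clause.subst, Clause.subst, Multiset.map_map]
  exact Multiset.map_congr rfl (fun L _ => Lit.subst_subst hcomp L)


/-- Lemma 3: the conclusion `(C'σ·θ)` of a ground Equality Resolution
inference of the Ground Closure Horn Superposition Calculus is `≫_R`-smaller than its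
premise `(C' ∨ s ≉ s' · θ)`, for every left-reduced ground rewrite system `R`
contained in `≻`. -/
theorem eqres_reduces {F V : Type} (O : ReductionOrdering F V) (T : TieBreak F V)
    (C' : Clause F V) (s s' : Trm F V) (σ θ : V → Trm F V)
    (hg : Closure.IsGround (C' + {Lit.neg s s'}, θ))
    (heq : s.subst θ = s'.subst θ)
    (hmgu : IsMGU σ s s')
    (hmax : MaxIn O (Lit.subst θ (Lit.neg s s')) (Clause.subst θ C')) :
    ∀ R : Set (Trm F V × Trm F V), GoodRS O R →
      cloGT O T R (C' + {Lit.neg s s'}, θ) (Clause.subst σ C', θ) := by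
  intro R hRS
  have hLR : LeftReduced R := hRS.1
  have hcomp : ∀ t : Trm F V, (t.subst σ).subst θ = t.subst θ := by
    intro t
    rw [Trm.subst_subst]
    congr 1
    funext x
    exact hmgu.2 θ heq x
  -- cover of normalization multisets
  have hcover : Cover (lexGT O) (nm R (Clause.subst σ C') θ)
      (nm R (C' + ({Lit.neg s s'} : Clause F V)) θ) := by
    rw [nm, nm]
    exact Cover.add (cover_nm_lss hRS hLR hcomp) (cover_nm_lts hcomp)
  have hinst : Closure.inst (Clause.subst σ C', θ) = Clause.subst θ C' := by
    show Clause.subst θ (Clause.subst σ C') = Clause.subst θ C'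
    exact Clause.subst_subst hcomp C'
  have hinstP : Closure.inst (C' + ({Lit.neg s s'} : Clause F V), θ)
      = Clause.subst θ C' + {Lit.subst θ (Lit.neg s s')} := by
    show Clause.subst θ (C' + {Lit.neg s s'}) = _
    rw [Clause.subst, Multiset.map_add]
    congr 1
  have hclauseGT : clauseGT O (Closure.inst (C' + ({Lit.neg s s'} : Clause F V), θ))
      (Closure.inst (Clause.subst σ C', θ)) := by
    rw [hinst, hinstP]
    refine ⟨{Lit.subst θ (Lit.neg s s')}, 0, Clause.subst θ C', rfl, by simp, by simp, by simp⟩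
  rcases Cover.eq_or_multGT hcover with heqnm | hmult
  · exact Or.inr (Or.inl ⟨heqnm.symm ▸ rfl, hclauseGT⟩)
  · exact Or.inl hmult
end RMsec
end
end
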